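/- arXiv:1505.03820 — 8 statements merged into one kernel-verified Lean document; each statement's English description precedes it below -/
import Mathlib

section
/- Let (x_1, y_1, x_2, y_2) be a solution of Model (1) on [0, ∞) with all components nonnegative at t = 0. Set V(t) = ρ_2(x_1(t) + y_1(t)) + ρ_1(x_2(t) + y_2(t)), d = min{d_1, d_2}, and M = sup{ρ_2·u(1 − u/K_1) + ρ_2 d_1 u + ρ_1 r·v(1 − v/K_2) + ρ_1 d_2 v : 0 ≤ u ≤ K_1, 0 ≤ v ≤ K_2}. Then lim sup_{t→∞} V(t) ≤ M/d; in particular Model (1) is bounded in the nonnegative cone. -/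
/-!
Solutions stay nonnegative, since each equation has the form `z' = z · g(t)`. In the weighted
total `V = ρ₂(x₁ + y₁) + ρ₁(x₂ + y₂)` the predation-transfer terms cancel, leaving
`V' = ρ₂(x₁(1 - x₁/K₁) - d₁y₁) + ρ₁(r x₂(1 - x₂/K₂) - d₂y₂)`. The logistic equations push each
prey `xᵢ` eventually below `Kᵢ + ε`, hence eventually `V' + dV ≤ M + O(ε)`, and Gronwall's
inequality gives `limsup V ≤ (M + O(ε)) / d` for every `ε > 0`.
-/

open Filter Set Topology

theorem nonneg_of_hasDerivAt_mul {f g : ℝ → ℝ} {a : ℝ}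
    (hf : ∀ t ≥ a, HasDerivAt f (f t * g t) t)
    (hg : ∀ t ≥ a, f t = 0 → ContinuousAt g t) (ha : 0 ≤ f a) :
    ∀ t ≥ a, 0 ≤ f t := by
  intro s hs
  by_contra! hfs
  have hcont : ContinuousOn f (Icc a s) := fun t ht =>
    (hf t ht.1).continuousAt.continuousWithinAt
  set A := Icc a s ∩ f ⁻¹' Ici 0
  have hA_bdd : BddAbove A := ⟨s, fun t ht => ht.1.2⟩
  have hcA : sSup A ∈ A :=
    (hcont.preimage_isClosed_of_isClosed isClosed_Icc isClosed_Ici).csSup_mem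
      ⟨a, ⟨le_rfl, hs⟩, ha⟩ hA_bdd
  set c := sSup A
  have hac : a ≤ c := hcA.1.1
  have hneg : ∀ t ∈ Ioc c s, f t < 0 := fun t ht =>
    not_le.1 fun h => (le_csSup hA_bdd ⟨⟨hac.trans ht.1.le, ht.2⟩, h⟩).not_gt ht.1
  have hcs : c < s := hcA.1.2.lt_of_ne fun h => hfs.not_ge (h ▸ hcA.2)
  have hfc : f c = 0 := by
    refine le_antisymm (le_of_tendsto ((hf c hac).continuousAt.tendsto.mono_left
      (nhdsWithin_le_nhds (s := Ioi c))) ?_) hcA.2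
    filter_upwards [Ioc_mem_nhdsGT hcs] with t ht using (hneg t ht).le
  -- Near the zero `c` we have `|f'| ≤ C |f|`, so by Gronwall `f` vanishes just after `c`.
  obtain ⟨b, hcb, hgb⟩ : ∃ b ∈ Ioi c, Icc c b ⊆ {t | ‖g t‖ ≤ ‖g c‖ + 1} :=
    mem_nhdsGE_iff_exists_Icc_subset.1 <| nhdsWithin_le_nhds <|
      (hg c hac hfc).norm.eventually (ge_mem_nhds (lt_add_one _))
  set b' := min b s
  have hb' : b' ∈ Ioc c s := ⟨lt_min hcb hcs, min_le_right _ _⟩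
  have hfb' : f b' = 0 := eq_zero_of_abs_deriv_le_mul_abs_self_of_eq_zero_right
    (hcont.mono (Icc_subset_Icc hac hb'.2))
    (fun t ht => (hf t (hac.trans ht.1)).hasDerivWithinAt) hfc
    (fun t ht => by
      rw [norm_mul, mul_comm]
      exact mul_le_mul_of_nonneg_right
        (hgb ⟨ht.1, ht.2.le.trans (min_le_left _ _)⟩) (norm_nonneg _))
    b' ⟨hb'.1.le, le_rfl⟩
  exact (hneg b' hb').ne hfb'

theorem eventually_le_of_deriv_le_neg {f f' : ℝ → ℝ} {b c : ℝ} (hc : 0 < c)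
    (hf : ∀ᶠ t in atTop, HasDerivAt f (f' t) t)
    (hdec : ∀ᶠ t in atTop, b ≤ f t → f' t ≤ -c) :
    ∀ᶠ t in atTop, f t ≤ b := by
  obtain ⟨T, hT⟩ := eventually_atTop.1 (hf.and hdec)
  have hcont : ∀ s, ContinuousOn f (Icc T s) := fun s t ht =>
    (hT t ht.1).1.continuousAt.continuousWithinAt
  have hderiv : ∀ s, ∀ t ∈ Ico T s, HasDerivWithinAt f (f' t) (Ici t) t := fun s t ht =>
    (hT t ht.1).1.hasDerivWithinAt
  obtain ⟨T₀, hTT₀, hfT₀⟩ : ∃ T₀ ≥ T, f T₀ ≤ b := by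
    by_contra! habove
    have hlin : ∀ s ≥ T, f s ≤ f T - c * (s - T) := fun s hs =>
      image_le_of_deriv_right_le_deriv_boundary (B := fun s => f T - c * (s - T))
        (B' := fun _ => -c) (hcont s) (hderiv s) (by simp) (by fun_prop)
        (fun t _ => by
          simpa using (((hasDerivAt_id t).sub_const T).const_mul c).const_sub (f T)
            |>.hasDerivWithinAt)
        (fun t ht => (hT t ht.1).2 (habove t ht.1).le) ⟨hs, le_rfl⟩
    have hTs : T ≤ T + (f T - b) / c :=
      le_add_of_nonneg_right (div_nonneg (by linarith [habove T le_rfl]) hc.le)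
    have hfs := hlin _ hTs
    rw [add_sub_cancel_left, mul_div_cancel₀ _ hc.ne'] at hfs
    linarith [habove _ hTs]
  -- Once at `b`, `f` cannot cross `b` upward since `f' < 0` there.
  filter_upwards [eventually_ge_atTop T₀] with s hs
  exact image_le_of_deriv_right_lt_deriv_boundary' (B := fun _ => b) (B' := fun _ => 0)
    ((hcont s).mono (Icc_subset_Icc_left hTT₀))
    (fun t ht => hderiv s t ⟨hTT₀.trans ht.1, ht.2⟩) hfT₀ continuousOn_const
    (fun t _ => hasDerivWithinAt_const _ _ _)
    (fun t ht hft => ((hT t (hTT₀.trans ht.1)).2 hft.ge).trans_lt (neg_neg_of_pos hc))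
    ⟨hs, le_rfl⟩

theorem eventually_le_of_deriv_le_logistic {x x' : ℝ → ℝ} {r K ε : ℝ}
    (hr : 0 < r) (hK : 0 < K) (hε : 0 < ε)
    (hx : ∀ᶠ t in atTop, HasDerivAt x (x' t) t)
    (hx' : ∀ᶠ t in atTop, x' t ≤ r * x t * (1 - x t / K)) :
    ∀ᶠ t in atTop, x t ≤ K + ε := by
  refine eventually_le_of_deriv_le_neg (c := r * ((K + ε) * ε) / K) (by positivity) hx ?_
  filter_upwards [hx'] with t ht hxt
  have hlogistic : x t * (K - x t) ≤ -((K + ε) * ε) := by nlinarith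
  calc x' t ≤ r * (x t * (K - x t)) / K := ht.trans_eq (by field_simp)
    _ ≤ r * -((K + ε) * ε) / K := by gcongr
    _ = -(r * ((K + ε) * ε) / K) := by ring

theorem limsup_le_of_deriv_add_mul_le {V V' : ℝ → ℝ} {A d : ℝ} (hd : 0 < d)
    (hV : ∀ᶠ t in atTop, HasDerivAt V (V' t) t)
    (hbound : ∀ᶠ t in atTop, V' t + d * V t ≤ A)
    (hV_bdd : IsBoundedUnder (· ≥ ·) atTop V) :
    limsup V atTop ≤ A / d := by
  obtain ⟨T, hT⟩ := eventually_atTop.1 (hV.and hbound)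
  set B := fun t => gronwallBound (V T) (-d) A (t - T)
  have hVB : V ≤ᶠ[atTop] B := by
    filter_upwards [eventually_ge_atTop T] with s hs
    exact le_gronwallBound_of_liminf_deriv_right_le
      (fun t ht => (hT t ht.1).1.continuousAt.continuousWithinAt)
      (fun t ht _ hr => (hT t ht.1).1.hasDerivWithinAt.liminf_right_slope_le hr) le_rfl
      (fun t ht => by linarith [(hT t ht.1).2]) s ⟨hs, le_rfl⟩
  have hB : Tendsto B atTop (𝓝 (A / d)) := by
    have hexp : Tendsto (fun t => Real.exp (-d * (t - T))) atTop (𝓝 0) :=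
      Real.tendsto_exp_atBot.comp <|
        (tendsto_atTop_add_const_right _ _ tendsto_id).const_mul_atTop_of_neg (neg_lt_zero.2 hd)
    have := (hexp.const_mul (V T)).add ((hexp.sub_const 1).const_mul (A / -d))
    simp only [B, gronwallBound_of_K_ne_0 (neg_ne_zero.2 hd.ne')]
    convert this using 2
    field_simp
    ring
  exact (limsup_le_limsup hVB hV_bdd.isCoboundedUnder_le hB.isBoundedUnder_le).trans_eq
    hB.limsup_eq

theorem exists_mem_Icc_logistic_add_le {p q K u ε : ℝ} (hp : 0 ≤ p) (hq : 0 ≤ q) (hK : 0 < K)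
    (hε : 0 ≤ ε) (hu : 0 ≤ u) (huK : u ≤ K + ε) :
    ∃ w ∈ Icc 0 K, p * (u * (1 - u / K)) + q * u ≤ p * (w * (1 - w / K)) + q * w + q * ε := by
  rcases le_total u K with hle | hge
  · exact ⟨u, ⟨hu, hle⟩, le_add_of_nonneg_right (mul_nonneg hq hε)⟩
  · refine ⟨K, ⟨hK.le, le_rfl⟩, ?_⟩
    have hlogistic : u * (1 - u / K) ≤ 0 :=
      mul_nonpos_of_nonneg_of_nonpos hu (sub_nonpos.2 ((one_le_div hK).2 hge))
    rw [div_self hK.ne', sub_self, mul_zero, mul_zero, zero_add]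
    linarith [mul_nonpos_of_nonneg_of_nonpos hp hlogistic, mul_le_mul_of_nonneg_left huK hq]

theorem bddAbove_setOf_box {F : ℝ → ℝ → ℝ} (hF : Continuous fun p : ℝ × ℝ => F p.1 p.2)
    (K1 K2 : ℝ) :
    BddAbove {w | ∃ u v, 0 ≤ u ∧ u ≤ K1 ∧ 0 ≤ v ∧ v ≤ K2 ∧ w = F u v} :=
  ((isCompact_Icc.prod isCompact_Icc).bddAbove_image hF.continuousOn).mono <| by
    rintro w ⟨u, v, hu0, huK, hv0, hvK, rfl⟩
    exact ⟨(u, v), ⟨⟨hu0, huK⟩, hv0, hvK⟩, rfl⟩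

theorem weightedTotal_deriv_add_mul_le {r K1 K2 d1 d2 ρ1 ρ2 d u b v c ε : ℝ} (hr : 0 < r)
    (hK1 : 0 < K1) (hK2 : 0 < K2) (hd1 : d ≤ d1) (hd2 : d ≤ d2) (hd : 0 ≤ d) (hρ1 : 0 ≤ ρ1)
    (hρ2 : 0 ≤ ρ2) (hε : 0 ≤ ε) (hu : 0 ≤ u) (huK : u ≤ K1 + ε) (hb : 0 ≤ b) (hv : 0 ≤ v)
    (hvK : v ≤ K2 + ε) (hc : 0 ≤ c) :
    ρ2 * (u * (1 - u / K1) - d1 * b) + ρ1 * (r * v * (1 - v / K2) - d2 * c) +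
        d * (ρ2 * (u + b) + ρ1 * (v + c)) ≤
      sSup {w : ℝ | ∃ u v : ℝ, 0 ≤ u ∧ u ≤ K1 ∧ 0 ≤ v ∧ v ≤ K2 ∧
        w = ρ2 * (u * (1 - u / K1)) + ρ2 * d1 * u +
          ρ1 * (r * (v * (1 - v / K2))) + ρ1 * d2 * v} + (ρ2 * d1 + ρ1 * d2) * ε := by
  obtain ⟨u', ⟨hu'0, hu'K⟩, hu'⟩ :=
    exists_mem_Icc_logistic_add_le hρ2 (mul_nonneg hρ2 (hd.trans hd1)) hK1 hε hu huK
  obtain ⟨v', ⟨hv'0, hv'K⟩, hv'⟩ := exists_mem_Icc_logistic_add_le (mul_nonneg hρ1 hr.le)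
    (mul_nonneg hρ1 (hd.trans hd2)) hK2 hε hv hvK
  have hbdd := bddAbove_setOf_box (F := fun u v => ρ2 * (u * (1 - u / K1)) + ρ2 * d1 * u +
    ρ1 * (r * (v * (1 - v / K2))) + ρ1 * d2 * v) (by fun_prop) K1 K2
  have hsup := le_csSup hbdd ⟨u', v', hu'0, hu'K, hv'0, hv'K, rfl⟩
  linarith [mul_nonneg (mul_nonneg hρ2 (sub_nonneg.2 hd1)) (add_nonneg hu hb),
    mul_nonneg (mul_nonneg hρ1 (sub_nonneg.2 hd2)) (add_nonneg hv hc)]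

structure Model1Solution (r a1 a2 K1 K2 d1 d2 ρ1 ρ2 : ℝ) (x1 y1 x2 y2 : ℝ → ℝ) : Prop where
  hasDerivAt_x1 : ∀ t : ℝ, 0 ≤ t → HasDerivAt x1
    (x1 t * (1 - x1 t / K1) - a1 * x1 t * y1 t / (1 + x1 t)) t
  hasDerivAt_y1 : ∀ t : ℝ, 0 ≤ t → HasDerivAt y1
    (a1 * x1 t * y1 t / (1 + x1 t) - d1 * y1 t +
      ρ1 * (a1 * x1 t * y1 t * y2 t / (1 + x1 t) - a2 * x2 t * y1 t * y2 t / (1 + x2 t))) t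
  hasDerivAt_x2 : ∀ t : ℝ, 0 ≤ t → HasDerivAt x2
    (r * x2 t * (1 - x2 t / K2) - a2 * x2 t * y2 t / (1 + x2 t)) t
  hasDerivAt_y2 : ∀ t : ℝ, 0 ≤ t → HasDerivAt y2
    (a2 * x2 t * y2 t / (1 + x2 t) - d2 * y2 t +
      ρ2 * (a2 * x2 t * y1 t * y2 t / (1 + x2 t) - a1 * x1 t * y1 t * y2 t / (1 + x1 t))) t

namespace Model1Solution

variable {r a1 a2 K1 K2 d1 d2 ρ1 ρ2 : ℝ} {x1 y1 x2 y2 : ℝ → ℝ}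

theorem x1_nonneg (hs : Model1Solution r a1 a2 K1 K2 d1 d2 ρ1 ρ2 x1 y1 x2 y2)
    (hx10 : 0 ≤ x1 0) : ∀ t ≥ 0, 0 ≤ x1 t := by
  refine nonneg_of_hasDerivAt_mul (g := fun t => 1 - x1 t / K1 - a1 * y1 t / (1 + x1 t))
    (fun t ht => (hs.hasDerivAt_x1 t ht).congr_deriv (by ring)) (fun t ht hx1t => ?_) hx10
  have := (hs.hasDerivAt_x1 t ht).continuousAt
  have := (hs.hasDerivAt_y1 t ht).continuousAt
  fun_prop (disch := simp [hx1t])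

theorem x2_nonneg (hs : Model1Solution r a1 a2 K1 K2 d1 d2 ρ1 ρ2 x1 y1 x2 y2)
    (hx20 : 0 ≤ x2 0) : ∀ t ≥ 0, 0 ≤ x2 t := by
  refine nonneg_of_hasDerivAt_mul (g := fun t => r * (1 - x2 t / K2) - a2 * y2 t / (1 + x2 t))
    (fun t ht => (hs.hasDerivAt_x2 t ht).congr_deriv (by ring)) (fun t ht hx2t => ?_) hx20
  have := (hs.hasDerivAt_x2 t ht).continuousAt
  have := (hs.hasDerivAt_y2 t ht).continuousAt
  fun_prop (disch := simp [hx2t])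

theorem y1_nonneg (hs : Model1Solution r a1 a2 K1 K2 d1 d2 ρ1 ρ2 x1 y1 x2 y2)
    (hx1 : ∀ t ≥ 0, 0 ≤ x1 t) (hx2 : ∀ t ≥ 0, 0 ≤ x2 t) (hy10 : 0 ≤ y1 0) :
    ∀ t ≥ 0, 0 ≤ y1 t := by
  refine nonneg_of_hasDerivAt_mul (g := fun t => a1 * x1 t / (1 + x1 t) - d1 +
      ρ1 * (a1 * x1 t * y2 t / (1 + x1 t) - a2 * x2 t * y2 t / (1 + x2 t)))
    (fun t ht => (hs.hasDerivAt_y1 t ht).congr_deriv (by ring)) (fun t ht _ => ?_) hy10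
  have := (hs.hasDerivAt_x1 t ht).continuousAt
  have := (hs.hasDerivAt_x2 t ht).continuousAt
  have := (hs.hasDerivAt_y2 t ht).continuousAt
  have := hx1 t ht
  have := hx2 t ht
  fun_prop (disch := positivity)

theorem y2_nonneg (hs : Model1Solution r a1 a2 K1 K2 d1 d2 ρ1 ρ2 x1 y1 x2 y2)
    (hx1 : ∀ t ≥ 0, 0 ≤ x1 t) (hx2 : ∀ t ≥ 0, 0 ≤ x2 t) (hy20 : 0 ≤ y2 0) :
    ∀ t ≥ 0, 0 ≤ y2 t := by
  refine nonneg_of_hasDerivAt_mul (g := fun t => a2 * x2 t / (1 + x2 t) - d2 +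
      ρ2 * (a2 * x2 t * y1 t / (1 + x2 t) - a1 * x1 t * y1 t / (1 + x1 t)))
    (fun t ht => (hs.hasDerivAt_y2 t ht).congr_deriv (by ring)) (fun t ht _ => ?_) hy20
  have := (hs.hasDerivAt_x1 t ht).continuousAt
  have := (hs.hasDerivAt_x2 t ht).continuousAt
  have := (hs.hasDerivAt_y1 t ht).continuousAt
  have := hx1 t ht
  have := hx2 t ht
  fun_prop (disch := positivity)

theorem hasDerivAt_weightedTotal (hs : Model1Solution r a1 a2 K1 K2 d1 d2 ρ1 ρ2 x1 y1 x2 y2)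
    {t : ℝ} (ht : 0 ≤ t) :
    HasDerivAt (fun t => ρ2 * (x1 t + y1 t) + ρ1 * (x2 t + y2 t))
      (ρ2 * (x1 t * (1 - x1 t / K1) - d1 * y1 t) +
        ρ1 * (r * x2 t * (1 - x2 t / K2) - d2 * y2 t)) t :=
  ((((hs.hasDerivAt_x1 t ht).add (hs.hasDerivAt_y1 t ht)).const_mul ρ2).add
    (((hs.hasDerivAt_x2 t ht).add (hs.hasDerivAt_y2 t ht)).const_mul ρ1)).congr_deriv (by ring)

theorem eventually_x1_le (hs : Model1Solution r a1 a2 K1 K2 d1 d2 ρ1 ρ2 x1 y1 x2 y2)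
    (ha1 : 0 < a1) (hK1 : 0 < K1) (hx1 : ∀ t ≥ 0, 0 ≤ x1 t) (hy1 : ∀ t ≥ 0, 0 ≤ y1 t)
    {ε : ℝ} (hε : 0 < ε) : ∀ᶠ t in atTop, x1 t ≤ K1 + ε := by
  refine eventually_le_of_deriv_le_logistic one_pos hK1 hε
    ((eventually_ge_atTop 0).mono fun t ht => hs.hasDerivAt_x1 t ht) ?_
  filter_upwards [eventually_ge_atTop 0] with t ht
  have := hx1 t ht; have := hy1 t ht
  have : 0 ≤ a1 * x1 t * y1 t / (1 + x1 t) := by positivity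
  linarith

theorem eventually_x2_le (hs : Model1Solution r a1 a2 K1 K2 d1 d2 ρ1 ρ2 x1 y1 x2 y2)
    (hr : 0 < r) (ha2 : 0 < a2) (hK2 : 0 < K2) (hx2 : ∀ t ≥ 0, 0 ≤ x2 t)
    (hy2 : ∀ t ≥ 0, 0 ≤ y2 t) {ε : ℝ} (hε : 0 < ε) : ∀ᶠ t in atTop, x2 t ≤ K2 + ε := by
  refine eventually_le_of_deriv_le_logistic hr hK2 hε
    ((eventually_ge_atTop 0).mono fun t ht => hs.hasDerivAt_x2 t ht) ?_
  filter_upwards [eventually_ge_atTop 0] with t ht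
  have := hx2 t ht; have := hy2 t ht
  have : 0 ≤ a2 * x2 t * y2 t / (1 + x2 t) := by positivity
  linarith

end Model1Solution

/-- **Ultimate boundedness of Model (1).**
Along any solution of Model (1) with nonnegative initial conditions, the
weighted total population `V(t) = ρ₂(x₁(t)+y₁(t)) + ρ₁(x₂(t)+y₂(t))` satisfies
`limsup_{t→∞} V(t) ≤ M/d`, where `d = min{d₁, d₂}` and `M` is the supremum of
`ρ₂·u(1 − u/K₁) + ρ₂d₁u + ρ₁·r·v(1 − v/K₂) + ρ₁d₂v` over `0 ≤ u ≤ K₁`,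
`0 ≤ v ≤ K₂`. -/
theorem model1_ultimately_bounded
    (r a1 a2 K1 K2 d1 d2 ρ1 ρ2 : ℝ)
    (hr : 0 < r) (ha1 : 0 < a1) (ha2 : 0 < a2) (hK1 : 0 < K1) (hK2 : 0 < K2)
    (hd1 : 0 < d1) (hd2 : 0 < d2) (hρ1 : 0 ≤ ρ1) (hρ2 : 0 ≤ ρ2)
    (x1 y1 x2 y2 : ℝ → ℝ)
    (hx1 : ∀ t : ℝ, 0 ≤ t → HasDerivAt x1
      (x1 t * (1 - x1 t / K1) - a1 * x1 t * y1 t / (1 + x1 t)) t)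
    (hy1 : ∀ t : ℝ, 0 ≤ t → HasDerivAt y1
      (a1 * x1 t * y1 t / (1 + x1 t) - d1 * y1 t +
        ρ1 * (a1 * x1 t * y1 t * y2 t / (1 + x1 t) -
              a2 * x2 t * y1 t * y2 t / (1 + x2 t))) t)
    (hx2 : ∀ t : ℝ, 0 ≤ t → HasDerivAt x2
      (r * x2 t * (1 - x2 t / K2) - a2 * x2 t * y2 t / (1 + x2 t)) t)
    (hy2 : ∀ t : ℝ, 0 ≤ t → HasDerivAt y2
      (a2 * x2 t * y2 t / (1 + x2 t) - d2 * y2 t +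
        ρ2 * (a2 * x2 t * y1 t * y2 t / (1 + x2 t) -
              a1 * x1 t * y1 t * y2 t / (1 + x1 t))) t)
    (hx10 : 0 ≤ x1 0) (hy10 : 0 ≤ y1 0) (hx20 : 0 ≤ x2 0) (hy20 : 0 ≤ y2 0)
    (V : ℝ → ℝ)
    (hV : ∀ t : ℝ, V t = ρ2 * (x1 t + y1 t) + ρ1 * (x2 t + y2 t))
    (d M : ℝ)
    (hd : d = min d1 d2)
    (hM : M = sSup {w : ℝ | ∃ u v : ℝ, 0 ≤ u ∧ u ≤ K1 ∧ 0 ≤ v ∧ v ≤ K2 ∧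
      w = ρ2 * (u * (1 - u / K1)) + ρ2 * d1 * u +
          ρ1 * (r * (v * (1 - v / K2))) + ρ1 * d2 * v}) :
    limsup V atTop ≤ M / d := by
  have hs : Model1Solution r a1 a2 K1 K2 d1 d2 ρ1 ρ2 x1 y1 x2 y2 := ⟨hx1, hy1, hx2, hy2⟩
  have hx1n := hs.x1_nonneg hx10
  have hx2n := hs.x2_nonneg hx20
  have hy1n := hs.y1_nonneg hx1n hx2n hy10
  have hy2n := hs.y2_nonneg hx1n hx2n hy20
  have hdd1 : d ≤ d1 := hd ▸ min_le_left _ _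
  have hdd2 : d ≤ d2 := hd ▸ min_le_right _ _
  have hd0 : 0 < d := hd ▸ lt_min hd1 hd2
  have hV_bdd : IsBoundedUnder (· ≥ ·) atTop V :=
    isBoundedUnder_of_eventually_ge <| (eventually_ge_atTop 0).mono fun t ht => by
      have := hx1n t ht; have := hy1n t ht; have := hx2n t ht; have := hy2n t ht
      rw [hV]
      positivity
  have hlimsup_le : ∀ ε > 0, limsup V atTop ≤ (M + (ρ2 * d1 + ρ1 * d2) * ε) / d := by
    refine fun ε hε => limsup_le_of_deriv_add_mul_le hd0 ((eventually_ge_atTop 0).mono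
      fun t ht => funext hV ▸ hs.hasDerivAt_weightedTotal ht) ?_ hV_bdd
    filter_upwards [eventually_ge_atTop 0, hs.eventually_x1_le ha1 hK1 hx1n hy1n hε,
      hs.eventually_x2_le hr ha2 hK2 hx2n hy2n hε] with t ht hx1K hx2K
    exact hV t ▸ hM ▸ weightedTotal_deriv_add_mul_le hr hK1 hK2 hdd1 hdd2 hd0.le hρ1 hρ2 hε.le
      (hx1n t ht) hx1K (hy1n t ht) (hx2n t ht) hx2K (hy2n t ht)
  have htend : Tendsto (fun ε => (M + (ρ2 * d1 + ρ1 * d2) * ε) / d) (𝓝[>] 0) (𝓝 (M / d)) := by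
    simpa using (show ContinuousWithinAt (fun ε => (M + (ρ2 * d1 + ρ1 * d2) * ε) / d) (Ioi 0) 0
      by fun_prop).tendsto
  exact ge_of_tendsto htend (eventually_mem_nhdsWithin.mono hlimsup_le)
end

section
/- Suppose a_iK_i/(1+K_i) < d_i for both i = 1 and i = 2 (equivalently μ_i > K_i, where μ_i = d_i/(a_i − d_i) when a_i > d_i). Then the boundary equilibrium (K_1, 0, K_2, 0) of Model (1) is globally asymptotically stable: every solution of Model (1) on [0, ∞) with x_1(0) > 0, x_2(0) > 0, y_1(0) ≥ 0, y_2(0) ≥ 0 satisfies (x_1(t), y_1(t), x_2(t), y_2(t)) → (K_1, 0, K_2, 0) as t → ∞. -/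
/-!
Each equation of the model has the form `z' = z · g` with `g` continuous as long as the prey stay
nonnegative, so positive prey and nonnegative predators stay so. Each prey then obeys the logistic
inequality `x' ≤ r x (1 - x / K)`, hence eventually `xᵢ ≤ Kᵢ + ε`, and `aᵢKᵢ/(1+Kᵢ) < dᵢ` makes the
predator gain `aᵢxᵢ/(1+xᵢ) - dᵢ` eventually `≤ -δ`. The exchange terms cancel in `ρ₂y₁ + ρ₁y₂`,
which therefore decays exponentially; so the exchange terms become negligible in each predator
equation and `yᵢ → 0`. With vanishing predation, `xᵢ` follows an asymptotically logistic equation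
and tends to `Kᵢ`.
-/
open Filter Set Real Topology

theorem eventually_le_of_deriv_le_neg_s4 {u u' : ℝ → ℝ} {C c : ℝ} (hc : 0 < c)
    (hu : ∀ᶠ t in atTop, HasDerivAt u (u' t) t)
    (hneg : ∀ᶠ t in atTop, C ≤ u t → u' t ≤ -c) :
    ∀ᶠ t in atTop, u t ≤ C := by
  obtain ⟨T, hT⟩ := (hu.and hneg).exists_forall_of_atTop
  have hcont : ∀ a b, T ≤ a → ContinuousOn u (Icc a b) := fun a b ha t ht =>
    (hT t (ha.trans ht.1)).1.continuousAt.continuousWithinAt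
  have hderiv : ∀ a b, T ≤ a → ∀ t ∈ Ico a b, HasDerivWithinAt u (u' t) (Ici t) t :=
    fun a b ha t ht => (hT t (ha.trans ht.1)).1.hasDerivWithinAt
  obtain ⟨t₀, hTt₀, ht₀⟩ : ∃ t₀, T ≤ t₀ ∧ u t₀ ≤ C := by
    by_contra! habove
    -- staying above `C` forces `u` down at rate `c`, below `C` after time `(u T - C) / c`
    set t := T + (u T - C) / c + 1
    have hTt : T ≤ t := by
      have : 0 ≤ (u T - C) / c := div_nonneg (sub_nonneg.2 (habove T le_rfl).le) hc.le
      linarith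
    have hlin := image_le_of_deriv_right_le_deriv_boundary (hcont T t le_rfl)
      (hderiv T t le_rfl) (B := fun s => u T - c * (s - T)) (B' := fun _ => -c) (by simp)
      (by fun_prop)
      (fun s _ => by simpa using ((hasDerivAt_id s).sub_const T).const_mul c |>.const_sub (u T)
        |>.hasDerivWithinAt)
      (fun s hs => (hT s hs.1).2 (habove s hs.1).le) ⟨hTt, le_rfl⟩
    have : c * (t - T) = u T - C + c := by
      simp only [t]; field_simp; ring
    linarith [habove t hTt]
  filter_upwards [eventually_ge_atTop t₀] with t ht
  exact image_le_of_deriv_right_lt_deriv_boundary (hcont t₀ t hTt₀) (hderiv t₀ t hTt₀) ht₀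
    (B' := fun _ => 0) (fun _ => hasDerivAt_const _ C)
    (fun s hs hs' => (hT s (hTt₀.trans hs.1)).2 hs'.ge |>.trans_lt (neg_neg_of_pos hc))
    ⟨ht, le_rfl⟩

theorem eventually_ge_of_deriv_ge_pos {u u' : ℝ → ℝ} {C c : ℝ} (hc : 0 < c)
    (hu : ∀ᶠ t in atTop, HasDerivAt u (u' t) t)
    (hpos : ∀ᶠ t in atTop, u t ≤ C → c ≤ u' t) :
    ∀ᶠ t in atTop, C ≤ u t := by
  have := eventually_le_of_deriv_le_neg_s4 (u := -u) (u' := -u') (C := -C) hc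
    (hu.mono fun t h => h.neg) (hpos.mono fun t h h' => by
      simp only [Pi.neg_apply, neg_le_neg_iff] at h' ⊢; exact h h')
  exact this.mono fun t h => by simpa using h

theorem tendsto_zero_of_deriv_le_neg_mul {v v' : ℝ → ℝ} {δ : ℝ} (hδ : 0 < δ)
    (hv : ∀ᶠ t in atTop, HasDerivAt v (v' t) t) (hnonneg : ∀ᶠ t in atTop, 0 ≤ v t)
    (hdecay : ∀ᶠ t in atTop, v' t ≤ -δ * v t) :
    Tendsto v atTop (𝓝 0) := by
  refine tendsto_order.2 ⟨fun a ha => hnonneg.mono fun t ht => ha.trans_le ht, fun b hb => ?_⟩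
  have hsmall := eventually_le_of_deriv_le_neg_s4 (C := b / 2) (c := δ * (b / 2)) (by positivity) hv
    (hdecay.mono fun t h hC => h.trans (by nlinarith))
  exact hsmall.mono fun t ht => ht.trans_lt (by linarith)

theorem exists_first_zero {z : ℝ → ℝ} {a b : ℝ} (hab : a ≤ b) (hz : ContinuousOn z (Icc a b))
    (ha : 0 < z a) (hb : z b ≤ 0) : ∃ s ∈ Ioc a b, z s = 0 ∧ ∀ u ∈ Icc a s, 0 ≤ z u := by
  set S := Icc a b ∩ z ⁻¹' Iic 0
  have hS : IsClosed S := hz.preimage_isClosed_of_isClosed isClosed_Icc isClosed_Iic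
  have hsS : sInf S ∈ S := hS.csInf_mem ⟨b, ⟨hab, le_rfl⟩, hb⟩ ⟨a, fun u hu => hu.1.1⟩
  set s := sInf S
  have hmin : ∀ u ∈ Icc a s, z u ≤ 0 → s ≤ u := fun u hu hzu =>
    csInf_le ⟨a, fun v hv => hv.1.1⟩ ⟨⟨hu.1, hu.2.trans hsS.1.2⟩, hzu⟩
  have has : a < s := hsS.1.1.lt_of_ne fun h => (not_le.2 ha) (h ▸ hsS.2)
  obtain ⟨w, hw, hzw⟩ := intermediate_value_Icc' has.le (hz.mono (Icc_subset_Icc_right hsS.1.2))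
    ⟨hsS.2.out, ha.le⟩
  have hzs : z s = 0 := le_antisymm hw.2 (hmin w hw hzw.le) ▸ hzw
  refine ⟨s, ⟨has, hsS.1.2⟩, hzs, fun u hu => ?_⟩
  by_contra! hneg
  rw [le_antisymm hu.2 (hmin u hu hneg.le), hzs] at hneg
  exact lt_irrefl 0 hneg

theorem pos_of_hasDerivAt_mul {z g : ℝ → ℝ} (hz : ∀ t, 0 ≤ t → HasDerivAt z (z t * g t) t)
    (hg : ∀ b, (∀ t ∈ Icc 0 b, 0 ≤ z t) → ContinuousOn g (Icc 0 b)) (h0 : 0 < z 0) :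
    ∀ t, 0 ≤ t → 0 < z t := by
  intro t ht
  by_contra! hzt
  obtain ⟨s, hs, hzs, hnonneg⟩ := exists_first_zero ht
    (fun u hu => (hz u hu.1).continuousAt.continuousWithinAt) h0 hzt
  obtain ⟨M, hM⟩ := isCompact_Icc.exists_bound_of_continuousOn (hg s hnonneg)
  -- `(z e^{Mt})' = z e^{Mt} (g + M) ≥ 0` as long as `z ≥ 0`
  have hmono : MonotoneOn (fun u => z u * exp (M * u)) (Icc 0 s) := by
    refine monotoneOn_of_hasDerivWithinAt_nonneg (convex_Icc 0 s)
      (f' := fun u => z u * exp (M * u) * (g u + M)) ?_ (fun u hu => ?_) (fun u hu => ?_)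
    · exact fun u hu => ((hz u hu.1).continuousAt.mul (by fun_prop)).continuousWithinAt
    · rw [interior_Icc] at hu
      have hd := (hz u hu.1.le).mul ((hasDerivAt_id u).const_mul M).exp
      refine (hd.congr_deriv ?_).hasDerivWithinAt
      simp only [id]
      ring
    · rw [interior_Icc] at hu
      have hu' : u ∈ Icc 0 s := Ioo_subset_Icc_self hu
      have hgM := neg_le_of_abs_le ((Real.norm_eq_abs _).symm ▸ hM u hu')
      exact mul_nonneg (mul_nonneg (hnonneg u hu') (exp_pos _).le) (by linarith)
  have := hmono ⟨le_rfl, hs.1.le⟩ ⟨hs.1.le, le_rfl⟩ hs.1.le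
  simp only [hzs, zero_mul, mul_zero, exp_zero, mul_one] at this
  linarith

theorem nonneg_of_hasDerivAt_mul_s4 {z g : ℝ → ℝ} (hz : ∀ t, 0 ≤ t → HasDerivAt z (z t * g t) t)
    (hg : ContinuousOn g (Ici 0)) (h0 : 0 ≤ z 0) : ∀ t, 0 ≤ t → 0 ≤ z t := by
  rcases h0.eq_or_lt with h0 | h0
  · intro t ht
    obtain ⟨M, hM⟩ := isCompact_Icc.exists_bound_of_continuousOn
      (hg.mono (Icc_subset_Ici_self : Icc 0 t ⊆ Ici 0))
    refine (eq_zero_of_abs_deriv_le_mul_abs_self_of_eq_zero_right (K := M)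
      (fun u hu => (hz u hu.1).continuousAt.continuousWithinAt)
      (fun u hu => (hz u hu.1).hasDerivWithinAt) h0.symm (fun u hu => ?_) t ⟨ht, le_rfl⟩).ge
    rw [norm_mul, mul_comm]
    exact mul_le_mul_of_nonneg_right (hM u (Ico_subset_Icc_self hu)) (norm_nonneg _)
  · exact fun t ht => (pos_of_hasDerivAt_mul hz (fun _ _ => hg.mono Icc_subset_Ici_self) h0 t ht).le

section Logistic

variable {x q : ℝ → ℝ} {r K : ℝ}

theorem logistic_eventually_le (hr : 0 < r) (hK : 0 < K)
    (hx : ∀ᶠ t in atTop, HasDerivAt x (x t * (r * (1 - x t / K) - q t)) t)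
    (hq : ∀ᶠ t in atTop, 0 ≤ q t) {c : ℝ} (hc : K < c) :
    ∀ᶠ t in atTop, x t ≤ c := by
  have hrate : r * (1 - c / K) < 0 :=
    mul_neg_of_pos_of_neg hr (sub_neg.2 ((one_lt_div hK).2 hc))
  refine eventually_le_of_deriv_le_neg_s4 (c := -(c * (r * (1 - c / K)))) (by nlinarith) hx
    (hq.mono fun t hqt hxt => ?_)
  have hxK : c / K ≤ x t / K := div_le_div_of_nonneg_right hxt hK.le
  rw [neg_neg]
  calc x t * (r * (1 - x t / K) - q t) ≤ x t * (r * (1 - c / K)) :=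
        mul_le_mul_of_nonneg_left (by nlinarith) (by linarith)
    _ ≤ c * (r * (1 - c / K)) := mul_le_mul_of_nonpos_right hxt hrate.le

theorem logistic_eventually_ge (hr : 0 < r)
    (hx : ∀ᶠ t in atTop, HasDerivAt x (x t * (r * (1 - x t / K) - q t)) t)
    (hpos : ∀ᶠ t in atTop, 0 < x t) (hq : Tendsto q atTop (𝓝 0)) {c : ℝ} (hc : 0 < c)
    (hcK : c < K) : ∀ᶠ t in atTop, c ≤ x t := by
  have hK : 0 < K := hc.trans hcK
  set γ := r * (1 - c / K) / 2
  have hγ : 0 < γ := half_pos (mul_pos hr (sub_pos.2 ((div_lt_one hK).2 hcK)))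
  -- the per-capita rate `(log x)'` stays above `γ` as long as `x ≤ c`
  have hlog := eventually_ge_of_deriv_ge_pos (u := fun t => log (x t)) (C := log c) hγ
    ((hx.and hpos).mono fun t h => h.1.log h.2.ne')
    ((hpos.and (hq.eventually (gt_mem_nhds hγ))).mono fun t ⟨hxt, hqt⟩ hlog => ?_)
  · filter_upwards [hlog, hpos] with t ht hxt
    exact (log_le_log_iff hc hxt).1 ht
  · have hxc : x t / K ≤ c / K := div_le_div_of_nonneg_right ((log_le_log_iff hxt hc).1 hlog) hK.le
    rw [mul_div_cancel_left₀ _ hxt.ne']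
    have h2γ : 2 * γ = r * (1 - c / K) := by ring
    linarith [mul_le_mul_of_nonneg_left hxc hr.le]

theorem logistic_tendsto (hr : 0 < r) (hK : 0 < K)
    (hx : ∀ᶠ t in atTop, HasDerivAt x (x t * (r * (1 - x t / K) - q t)) t)
    (hpos : ∀ᶠ t in atTop, 0 < x t) (hq_nonneg : ∀ᶠ t in atTop, 0 ≤ q t)
    (hq : Tendsto q atTop (𝓝 0)) : Tendsto x atTop (𝓝 K) := by
  refine tendsto_order.2 ⟨fun a ha => ?_, fun b hb => ?_⟩
  · have h0 := le_max_right a 0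
    have hmax : max a 0 < K := max_lt ha hK
    filter_upwards [logistic_eventually_ge hr hx hpos hq (c := (max a 0 + K) / 2) (by linarith)
      (by linarith)] with t ht
    linarith [le_max_left a 0]
  · filter_upwards [logistic_eventually_le hr hK hx hq_nonneg (c := (K + b) / 2) (by linarith)]
      with t ht
    linarith

end Logistic

noncomputable def holling (a x : ℝ) : ℝ := a * x / (1 + x)

theorem holling_nonneg {a x : ℝ} (ha : 0 ≤ a) (hx : 0 ≤ x) : 0 ≤ holling a x := by
  unfold holling; positivity

theorem holling_le {a x : ℝ} (ha : 0 ≤ a) (hx : 0 ≤ x) : holling a x ≤ a := by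
  unfold holling
  rw [div_le_iff₀ (by positivity)]
  nlinarith

theorem holling_le_add {a K x e : ℝ} (ha : 0 ≤ a) (hK : 0 ≤ K) (hx : 0 ≤ x) (he : 0 ≤ e)
    (hxe : x ≤ K + e) : holling a x ≤ holling a K + a * e := by
  unfold holling
  rw [div_add' _ _ _ (by positivity), div_le_div_iff₀ (by positivity) (by positivity)]
  nlinarith [mul_nonneg (mul_nonneg ha he) (mul_nonneg hK hx), mul_nonneg ha he,
    mul_nonneg (mul_nonneg ha he) hK, mul_nonneg (mul_nonneg ha he) hx,
    mul_le_mul_of_nonneg_left hxe ha]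

/-- One patch of Model (1) in per-capita form; `xₒ`, `yₒ` and `aₒ` belong to the other patch. -/
structure IsPatchSolution (r K a d ρ aₒ : ℝ) (x y xₒ yₒ : ℝ → ℝ) : Prop where
  hasDerivAt_prey : ∀ t, 0 ≤ t →
    HasDerivAt x (x t * (r * (1 - x t / K) - a * y t / (1 + x t))) t
  hasDerivAt_predator : ∀ t, 0 ≤ t →
    HasDerivAt y (y t * (holling a (x t) - d + ρ * yₒ t * (holling a (x t) - holling aₒ (xₒ t)))) t

namespace IsPatchSolution

variable {r K a d ρ aₒ : ℝ} {x y xₒ yₒ : ℝ → ℝ}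

theorem continuousOn_prey (h : IsPatchSolution r K a d ρ aₒ x y xₒ yₒ) :
    ContinuousOn x (Ici 0) :=
  fun t ht => (h.hasDerivAt_prey t ht).continuousAt.continuousWithinAt

theorem continuousOn_predator (h : IsPatchSolution r K a d ρ aₒ x y xₒ yₒ) :
    ContinuousOn y (Ici 0) :=
  fun t ht => (h.hasDerivAt_predator t ht).continuousAt.continuousWithinAt

theorem prey_pos (h : IsPatchSolution r K a d ρ aₒ x y xₒ yₒ) (hx0 : 0 < x 0) :
    ∀ t, 0 ≤ t → 0 < x t := by
  refine pos_of_hasDerivAt_mul h.hasDerivAt_prey (fun b hb => ?_) hx0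
  have hx := h.continuousOn_prey.mono (Icc_subset_Ici_self : Icc 0 b ⊆ Ici 0)
  have hy := h.continuousOn_predator.mono (Icc_subset_Ici_self : Icc 0 b ⊆ Ici 0)
  fun_prop (disch := intro t ht; linarith [hb t ht])

theorem predator_nonneg (h : IsPatchSolution r K a d ρ aₒ x y xₒ yₒ)
    (hx : ∀ t, 0 ≤ t → 0 < x t) (hxₒ : ∀ t, 0 ≤ t → 0 < xₒ t)
    (hxₒ_cont : ContinuousOn xₒ (Ici 0)) (hyₒ_cont : ContinuousOn yₒ (Ici 0)) (hy0 : 0 ≤ y 0) :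
    ∀ t, 0 ≤ t → 0 ≤ y t := by
  refine nonneg_of_hasDerivAt_mul_s4 h.hasDerivAt_predator ?_ hy0
  have hx_cont := h.continuousOn_prey
  unfold holling
  fun_prop (disch := intro t ht; linarith [hx t ht, hxₒ t ht])

theorem exists_eventually_holling_sub_le (h : IsPatchSolution r K a d ρ aₒ x y xₒ yₒ)
    (hr : 0 < r) (hK : 0 < K) (ha : 0 < a) (hμ : holling a K < d)
    (hx : ∀ t, 0 ≤ t → 0 < x t) (hy : ∀ t, 0 ≤ t → 0 ≤ y t) :
    ∃ δ > 0, ∀ᶠ t in atTop, holling a (x t) - d ≤ -δ := by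
  set e := (d - holling a K) / (2 * a)
  have he : 0 < e := div_pos (by linarith) (by positivity)
  have hae : a * e = (d - holling a K) / 2 := by simp only [e]; field_simp
  refine ⟨(d - holling a K) / 2, by linarith, ?_⟩
  filter_upwards [logistic_eventually_le hr hK (c := K + e) (q := fun t => a * y t / (1 + x t))
      ((eventually_ge_atTop 0).mono h.hasDerivAt_prey)
      ((eventually_ge_atTop 0).mono fun t ht =>
        div_nonneg (mul_nonneg ha.le (hy t ht)) (by linarith [hx t ht]))
      (by linarith),
    eventually_ge_atTop 0] with t hxt ht
  linarith [holling_le_add ha.le hK.le (hx t ht).le he.le hxt]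

theorem predator_tendsto_zero (h : IsPatchSolution r K a d ρ aₒ x y xₒ yₒ) (ha : 0 ≤ a)
    (haₒ : 0 ≤ aₒ) (hρ : 0 ≤ ρ) (hx : ∀ t, 0 ≤ t → 0 < x t) (hxₒ : ∀ t, 0 ≤ t → 0 < xₒ t)
    (hy : ∀ t, 0 ≤ t → 0 ≤ y t) (hyₒ : ∀ t, 0 ≤ t → 0 ≤ yₒ t) {δ : ℝ} (hδ : 0 < δ)
    (hgain : ∀ᶠ t in atTop, holling a (x t) - d ≤ -δ)
    (hρyₒ : Tendsto (fun t => ρ * yₒ t) atTop (𝓝 0)) :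
    Tendsto y atTop (𝓝 0) := by
  refine tendsto_zero_of_deriv_le_neg_mul (half_pos hδ)
    ((eventually_ge_atTop 0).mono h.hasDerivAt_predator) ((eventually_ge_atTop 0).mono hy) ?_
  have hε : (0 : ℝ) < δ / (2 * (a + 1)) := div_pos hδ (by linarith)
  filter_upwards [hgain, hρyₒ.eventually (gt_mem_nhds hε), eventually_ge_atTop 0]
    with t hgain_t hsmall ht
  have hw : 0 ≤ ρ * yₒ t := mul_nonneg hρ (hyₒ t ht)
  have hgap : holling a (x t) - holling aₒ (xₒ t) ≤ a + 1 := by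
    linarith [holling_le ha (hx t ht).le, holling_nonneg haₒ (hxₒ t ht).le]
  have hexchange : ρ * yₒ t * (holling a (x t) - holling aₒ (xₒ t)) ≤ δ / 2 :=
    calc ρ * yₒ t * (holling a (x t) - holling aₒ (xₒ t))
        ≤ δ / (2 * (a + 1)) * (a + 1) :=
          (mul_le_mul_of_nonneg_left hgap hw).trans
            (mul_le_mul_of_nonneg_right hsmall.le (by positivity))
      _ = δ / 2 := by field_simp
  rw [mul_comm (-(δ / 2))]
  exact mul_le_mul_of_nonneg_left (by linarith) (hy t ht)

theorem prey_tendsto (h : IsPatchSolution r K a d ρ aₒ x y xₒ yₒ) (hr : 0 < r) (hK : 0 < K)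
    (ha : 0 ≤ a) (hx : ∀ t, 0 ≤ t → 0 < x t) (hy : ∀ t, 0 ≤ t → 0 ≤ y t)
    (hy_lim : Tendsto y atTop (𝓝 0)) : Tendsto x atTop (𝓝 K) := by
  have hpred_nonneg : ∀ t, 0 ≤ t → 0 ≤ a * y t / (1 + x t) := fun t ht =>
    div_nonneg (mul_nonneg ha (hy t ht)) (by linarith [hx t ht])
  refine logistic_tendsto hr hK ((eventually_ge_atTop 0).mono h.hasDerivAt_prey)
    ((eventually_ge_atTop 0).mono hx) ((eventually_ge_atTop 0).mono hpred_nonneg) ?_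
  refine squeeze_zero' ((eventually_ge_atTop 0).mono hpred_nonneg)
    ((eventually_ge_atTop 0).mono fun t ht => ?_) (by simpa using hy_lim.const_mul a)
  exact div_le_self (mul_nonneg ha (hy t ht)) (by linarith [hx t ht])

end IsPatchSolution

theorem tendsto_mul_predator_zero {r₁ r₂ K₁ K₂ a₁ a₂ d₁ d₂ ρ₁ ρ₂ δ₁ δ₂ : ℝ}
    {x₁ y₁ x₂ y₂ : ℝ → ℝ} (h₁ : IsPatchSolution r₁ K₁ a₁ d₁ ρ₁ a₂ x₁ y₁ x₂ y₂)
    (h₂ : IsPatchSolution r₂ K₂ a₂ d₂ ρ₂ a₁ x₂ y₂ x₁ y₁) (hρ₁ : 0 ≤ ρ₁) (hρ₂ : 0 ≤ ρ₂)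
    (hy₁ : ∀ t, 0 ≤ t → 0 ≤ y₁ t) (hy₂ : ∀ t, 0 ≤ t → 0 ≤ y₂ t) (hδ₁ : 0 < δ₁) (hδ₂ : 0 < δ₂)
    (hgain₁ : ∀ᶠ t in atTop, holling a₁ (x₁ t) - d₁ ≤ -δ₁)
    (hgain₂ : ∀ᶠ t in atTop, holling a₂ (x₂ t) - d₂ ≤ -δ₂) :
    Tendsto (fun t => ρ₁ * y₂ t) atTop (𝓝 0) ∧ Tendsto (fun t => ρ₂ * y₁ t) atTop (𝓝 0) := by
  have hw₁ : ∀ t, 0 ≤ t → 0 ≤ ρ₂ * y₁ t := fun t ht => mul_nonneg hρ₂ (hy₁ t ht)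
  have hw₂ : ∀ t, 0 ≤ t → 0 ≤ ρ₁ * y₂ t := fun t ht => mul_nonneg hρ₁ (hy₂ t ht)
  -- in `(ρ₂ y₁ + ρ₁ y₂)'` the exchange terms between the patches cancel
  have hV : Tendsto (fun t => ρ₂ * y₁ t + ρ₁ * y₂ t) atTop (𝓝 0) := by
    refine tendsto_zero_of_deriv_le_neg_mul (lt_min hδ₁ hδ₂)
      ((eventually_ge_atTop 0).mono fun t ht => ((h₁.hasDerivAt_predator t ht).const_mul ρ₂).add
        ((h₂.hasDerivAt_predator t ht).const_mul ρ₁))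
      ((eventually_ge_atTop 0).mono fun t ht => add_nonneg (hw₁ t ht) (hw₂ t ht)) ?_
    filter_upwards [hgain₁, hgain₂, eventually_ge_atTop 0] with t hgain₁_t hgain₂_t ht
    have e₁ := mul_le_mul_of_nonneg_left (hgain₁_t.trans (neg_le_neg (min_le_left δ₁ δ₂)))
      (hw₁ t ht)
    have e₂ := mul_le_mul_of_nonneg_left (hgain₂_t.trans (neg_le_neg (min_le_right δ₁ δ₂)))
      (hw₂ t ht)
    linarith
  exact ⟨squeeze_zero' ((eventually_ge_atTop 0).mono hw₂)
      ((eventually_ge_atTop 0).mono fun t ht => le_add_of_nonneg_left (hw₁ t ht)) hV,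
    squeeze_zero' ((eventually_ge_atTop 0).mono hw₁)
      ((eventually_ge_atTop 0).mono fun t ht => le_add_of_nonneg_right (hw₂ t ht)) hV⟩

theorem model1_global_stability_predator_free_general
    (r a1 a2 K1 K2 d1 d2 ρ1 ρ2 : ℝ)
    (hr : 0 < r) (ha1 : 0 < a1) (ha2 : 0 < a2) (hK1 : 0 < K1) (hK2 : 0 < K2)
    (hρ1 : 0 ≤ ρ1) (hρ2 : 0 ≤ ρ2)
    (hμ1 : a1 * K1 / (1 + K1) < d1) (hμ2 : a2 * K2 / (1 + K2) < d2)
    (x1 y1 x2 y2 : ℝ → ℝ)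
    (hx1 : ∀ t : ℝ, 0 ≤ t → HasDerivAt x1
      (x1 t * (1 - x1 t / K1) - a1 * x1 t * y1 t / (1 + x1 t)) t)
    (hy1 : ∀ t : ℝ, 0 ≤ t → HasDerivAt y1
      (a1 * x1 t * y1 t / (1 + x1 t) - d1 * y1 t +
        ρ1 * (a1 * x1 t * y1 t * y2 t / (1 + x1 t) -
              a2 * x2 t * y1 t * y2 t / (1 + x2 t))) t)
    (hx2 : ∀ t : ℝ, 0 ≤ t → HasDerivAt x2
      (r * x2 t * (1 - x2 t / K2) - a2 * x2 t * y2 t / (1 + x2 t)) t)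
    (hy2 : ∀ t : ℝ, 0 ≤ t → HasDerivAt y2
      (a2 * x2 t * y2 t / (1 + x2 t) - d2 * y2 t +
        ρ2 * (a2 * x2 t * y1 t * y2 t / (1 + x2 t) -
              a1 * x1 t * y1 t * y2 t / (1 + x1 t))) t)
    (hx10 : 0 < x1 0) (hy10 : 0 ≤ y1 0) (hx20 : 0 < x2 0) (hy20 : 0 ≤ y2 0) :
    Tendsto x1 atTop (nhds K1) ∧ Tendsto y1 atTop (nhds 0) ∧
      Tendsto x2 atTop (nhds K2) ∧ Tendsto y2 atTop (nhds 0) := by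
  have h₁ : IsPatchSolution 1 K1 a1 d1 ρ1 a2 x1 y1 x2 y2 :=
    ⟨fun t ht => (hx1 t ht).congr_deriv (by ring),
      fun t ht => (hy1 t ht).congr_deriv (by simp only [holling]; ring)⟩
  have h₂ : IsPatchSolution r K2 a2 d2 ρ2 a1 x2 y2 x1 y1 :=
    ⟨fun t ht => (hx2 t ht).congr_deriv (by ring),
      fun t ht => (hy2 t ht).congr_deriv (by simp only [holling]; ring)⟩
  have hx1_pos := h₁.prey_pos hx10
  have hx2_pos := h₂.prey_pos hx20
  have hy1_nonneg := h₁.predator_nonneg hx1_pos hx2_pos h₂.continuousOn_prey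
    h₂.continuousOn_predator hy10
  have hy2_nonneg := h₂.predator_nonneg hx2_pos hx1_pos h₁.continuousOn_prey
    h₁.continuousOn_predator hy20
  obtain ⟨δ1, hδ1, hgain1⟩ :=
    h₁.exists_eventually_holling_sub_le one_pos hK1 ha1 hμ1 hx1_pos hy1_nonneg
  obtain ⟨δ2, hδ2, hgain2⟩ :=
    h₂.exists_eventually_holling_sub_le hr hK2 ha2 hμ2 hx2_pos hy2_nonneg
  obtain ⟨hρy2, hρy1⟩ := tendsto_mul_predator_zero h₁ h₂ hρ1 hρ2 hy1_nonneg hy2_nonneg hδ1 hδ2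
    hgain1 hgain2
  have hy1_lim := h₁.predator_tendsto_zero ha1.le ha2.le hρ1 hx1_pos hx2_pos hy1_nonneg
    hy2_nonneg hδ1 hgain1 hρy2
  have hy2_lim := h₂.predator_tendsto_zero ha2.le ha1.le hρ2 hx2_pos hx1_pos hy2_nonneg
    hy1_nonneg hδ2 hgain2 hρy1
  exact ⟨h₁.prey_tendsto one_pos hK1 ha1.le hx1_pos hy1_nonneg hy1_lim, hy1_lim,
    h₂.prey_tendsto hr hK2 ha2.le hx2_pos hy2_nonneg hy2_lim, hy2_lim⟩

/-- **Global stability of the predator-free equilibrium of Model (1).**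
If `aᵢKᵢ/(1+Kᵢ) < dᵢ` for `i = 1, 2` (equivalently `μᵢ > Kᵢ`), then every
solution of Model (1) with `x₁(0) > 0`, `x₂(0) > 0`, `y₁(0) ≥ 0`, `y₂(0) ≥ 0`
converges to `(K₁, 0, K₂, 0)` as `t → ∞`. -/
theorem model1_global_stability_predator_free
    (r a1 a2 K1 K2 d1 d2 ρ1 ρ2 : ℝ)
    (hr : 0 < r) (ha1 : 0 < a1) (ha2 : 0 < a2) (hK1 : 0 < K1) (hK2 : 0 < K2)
    (hd1 : 0 < d1) (hd2 : 0 < d2) (hρ1 : 0 ≤ ρ1) (hρ2 : 0 ≤ ρ2)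
    (hμ1 : a1 * K1 / (1 + K1) < d1) (hμ2 : a2 * K2 / (1 + K2) < d2)
    (x1 y1 x2 y2 : ℝ → ℝ)
    (hx1 : ∀ t : ℝ, 0 ≤ t → HasDerivAt x1
      (x1 t * (1 - x1 t / K1) - a1 * x1 t * y1 t / (1 + x1 t)) t)
    (hy1 : ∀ t : ℝ, 0 ≤ t → HasDerivAt y1
      (a1 * x1 t * y1 t / (1 + x1 t) - d1 * y1 t +
        ρ1 * (a1 * x1 t * y1 t * y2 t / (1 + x1 t) -
              a2 * x2 t * y1 t * y2 t / (1 + x2 t))) t)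
    (hx2 : ∀ t : ℝ, 0 ≤ t → HasDerivAt x2
      (r * x2 t * (1 - x2 t / K2) - a2 * x2 t * y2 t / (1 + x2 t)) t)
    (hy2 : ∀ t : ℝ, 0 ≤ t → HasDerivAt y2
      (a2 * x2 t * y2 t / (1 + x2 t) - d2 * y2 t +
        ρ2 * (a2 * x2 t * y1 t * y2 t / (1 + x2 t) -
              a1 * x1 t * y1 t * y2 t / (1 + x1 t))) t)
    (hx10 : 0 < x1 0) (hy10 : 0 ≤ y1 0) (hx20 : 0 < x2 0) (hy20 : 0 ≤ y2 0) :
    Tendsto x1 atTop (nhds K1) ∧ Tendsto y1 atTop (nhds 0) ∧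
      Tendsto x2 atTop (nhds K2) ∧ Tendsto y2 atTop (nhds 0) :=
  model1_global_stability_predator_free_general r a1 a2 K1 K2 d1 d2 ρ1 ρ2 hr ha1 ha2 hK1 hK2 hρ1 hρ2
    hμ1 hμ2 x1 y1 x2 y2 hx1 hy1 hx2 hy2 hx10 hy10 hx20 hy20
end

section
/- Let a_1, a_2, d_1, d_2, K_1, K_2 be strictly positive real numbers with a_1 > d_1, a_2 > d_2, a_1 > d_2, and a_2 > d_1. Then it is impossible that both chains of inequalities d_1/(a_1 − d_1) < K_1 < d_2/(a_1 − d_2) and d_2/(a_2 − d_2) < K_2 < d_1/(a_2 − d_1) hold simultaneously. (Consequently, the two boundary equilibria E_{12}^b = (μ_1, ν_1, K_2, 0) and E_{22}^b = (K_1, 0, μ_2, ν_2) of Model (1) cannot be locally asymptotically stable at the same time.) -/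
/-! Since `d ↦ d / (a - d)` is strictly increasing below `a` when `a > 0`, the first chain forces
`d₁ < d₂` and the second forces `d₂ < d₁`. -/

theorem div_sub_lt_div_sub_iff {a d e : ℝ} (ha : 0 < a) (hd : d < a) (he : e < a) :
    d / (a - d) < e / (a - e) ↔ d < e := by
  rw [div_lt_div_iff₀ (sub_pos.2 hd) (sub_pos.2 he)]
  calc d * (a - e) < e * (a - d) ↔ a * d < a * e := by constructor <;> intro h <;> linarith
    _ ↔ d < e := mul_lt_mul_iff_right₀ ha

theorem boundary_equilibria_not_both_stable_general
    (a1 a2 d1 d2 K1 K2 : ℝ)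
    (ha1 : 0 < a1) (ha2 : 0 < a2)
    (h11 : d1 < a1) (h22 : d2 < a2) (h12 : d2 < a1) (h21 : d1 < a2) :
    ¬ ((d1 / (a1 - d1) < K1 ∧ K1 < d2 / (a1 - d2)) ∧
       (d2 / (a2 - d2) < K2 ∧ K2 < d1 / (a2 - d1))) := by
  rintro ⟨⟨h1, h2⟩, ⟨h3, h4⟩⟩
  have hd12 : d1 < d2 := (div_sub_lt_div_sub_iff ha1 h11 h12).1 (h1.trans h2)
  have hd21 : d2 < d1 := (div_sub_lt_div_sub_iff ha2 h22 h21).1 (h3.trans h4)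
  exact lt_asymm hd12 hd21

/-- **The two predator-free boundary equilibria cannot both be stable.**
For strictly positive parameters with `a₁ > d₁`, `a₂ > d₂`, `a₁ > d₂`,
`a₂ > d₁`, it is impossible that both
`d₁/(a₁ − d₁) < K₁ < d₂/(a₁ − d₂)` and `d₂/(a₂ − d₂) < K₂ < d₁/(a₂ − d₁)`
hold simultaneously.  (Hence `E₁₂ᵇ` and `E₂₂ᵇ` of Model (1) cannot be
locally asymptotically stable at the same time.) -/
theorem boundary_equilibria_not_both_stable
    (a1 a2 d1 d2 K1 K2 : ℝ)
    (ha1 : 0 < a1) (ha2 : 0 < a2) (hd1 : 0 < d1) (hd2 : 0 < d2)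
    (hK1 : 0 < K1) (hK2 : 0 < K2)
    (h11 : d1 < a1) (h22 : d2 < a2) (h12 : d2 < a1) (h21 : d1 < a2) :
    ¬ ((d1 / (a1 - d1) < K1 ∧ K1 < d2 / (a1 - d2)) ∧
       (d2 / (a2 - d2) < K2 ∧ K2 < d1 / (a2 - d1))) :=
  boundary_equilibria_not_both_stable_general a1 a2 d1 d2 K1 K2 ha1 ha2 h11 h22 h12 h21
end

section
/- Suppose a_1 = a_2 = a > 0 and either d_1 > a + r·ρ_1 or d_2 > a + ρ_2. Then Model (1) has no interior equilibrium: there is no point (x_1, y_1, x_2, y_2) with all four coordinates strictly positive at which all four right-hand sides of Model (1) vanish. -/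
/-!
At an interior equilibrium, dividing the predator equation of a patch by its predator density
gives `d = a x/(1+x) + ρ · M`, where `M` is the migration term. The functional response is below
`a`, and the prey nullcline of the other patch, `a y'/(1+x') = s (1 - x'/K)`, turns `M` into
`s (1 - x'/K) (x - x')/(1+x)`, which is below the growth rate `s` of that prey. Hence `d < a + s ρ`.
-/

lemma hollingII_lt {a x : ℝ} (ha : 0 < a) (hx : 0 ≤ x) : a * x / (1 + x) < a := by
  rw [div_lt_iff₀ (by positivity)]
  nlinarith

lemma prey_nullcline {s a K x y : ℝ} (hx : 0 < x)
    (hprey : s * x * (1 - x / K) - a * x * y / (1 + x) = 0) :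
    a * y / (1 + x) = s * (1 - x / K) := by
  have h : x * (s * (1 - x / K) - a * y / (1 + x)) = 0 := by linear_combination hprey
  linear_combination -(mul_eq_zero.mp h).resolve_left hx.ne'

lemma migration_term_lt {s a K x x' y' : ℝ} (hs : 0 < s) (ha : 0 < a) (hK : 0 < K)
    (hx : 0 ≤ x) (hx' : 0 < x') (hy' : 0 < y')
    (hprey : s * x' * (1 - x' / K) - a * x' * y' / (1 + x') = 0) :
    a * x * y' / (1 + x) - a * x' * y' / (1 + x') < s := by
  have hc := prey_nullcline hx' hprey
  have hc_pos : 0 < s * (1 - x' / K) := hc ▸ by positivity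
  have hc_lt : s * (1 - x' / K) < s := by
    have : 0 < s * (x' / K) := by positivity
    linarith
  have ht : (x - x') / (1 + x) < 1 := (div_lt_one (by positivity)).mpr (by linarith)
  calc a * x * y' / (1 + x) - a * x' * y' / (1 + x')
      = a * y' / (1 + x') * ((x - x') / (1 + x)) := by field_simp; ring
    _ = s * (1 - x' / K) * ((x - x') / (1 + x)) := by rw [hc]
    _ < s * (1 - x' / K) := mul_lt_of_lt_one_right hc_pos ht
    _ < s := hc_lt

lemma death_rate_lt_of_equilibrium {s a K d ρ x y x' y' : ℝ} (hs : 0 < s) (ha : 0 < a)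
    (hK : 0 < K) (hρ : 0 ≤ ρ) (hx : 0 ≤ x) (hy : 0 < y) (hx' : 0 < x') (hy' : 0 < y')
    (hprey : s * x' * (1 - x' / K) - a * x' * y' / (1 + x') = 0)
    (hpred : a * x * y / (1 + x) - d * y +
      ρ * (a * x * y * y' / (1 + x) - a * x' * y * y' / (1 + x')) = 0) :
    d < a + s * ρ := by
  have hd : d = a * x / (1 + x) + ρ * (a * x * y' / (1 + x) - a * x' * y' / (1 + x')) := by
    have h : y * (a * x / (1 + x) + ρ * (a * x * y' / (1 + x) - a * x' * y' / (1 + x')) - d)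
        = 0 := by linear_combination hpred
    linear_combination -(mul_eq_zero.mp h).resolve_left hy.ne'
  have hM := mul_le_mul_of_nonneg_left (migration_term_lt hs ha hK hx hx' hy' hprey).le hρ
  linarith [hollingII_lt ha hx]

theorem model1_no_interior_equilibrium_equal_a_general
    (r a K1 K2 d1 d2 ρ1 ρ2 : ℝ)
    (hr : 0 < r) (ha : 0 < a) (hK1 : 0 < K1) (hK2 : 0 < K2)
    (hρ1 : 0 ≤ ρ1) (hρ2 : 0 ≤ ρ2)
    (hcase : d1 > a + r * ρ1 ∨ d2 > a + ρ2) :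
    ¬ ∃ x1 y1 x2 y2 : ℝ, 0 < x1 ∧ 0 < y1 ∧ 0 < x2 ∧ 0 < y2 ∧
        x1 * (1 - x1 / K1) - a * x1 * y1 / (1 + x1) = 0 ∧
        a * x1 * y1 / (1 + x1) - d1 * y1 +
          ρ1 * (a * x1 * y1 * y2 / (1 + x1) - a * x2 * y1 * y2 / (1 + x2)) = 0 ∧
        r * x2 * (1 - x2 / K2) - a * x2 * y2 / (1 + x2) = 0 ∧
        a * x2 * y2 / (1 + x2) - d2 * y2 +
          ρ2 * (a * x2 * y1 * y2 / (1 + x2) - a * x1 * y1 * y2 / (1 + x1)) = 0 := by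
  rintro ⟨x1, y1, x2, y2, hx1, hy1, hx2, hy2, hprey1, hpred1, hprey2, hpred2⟩
  rcases hcase with hd1 | hd2
  · have := death_rate_lt_of_equilibrium hr ha hK2 hρ1 hx1.le hy1 hx2 hy2 hprey2 hpred1
    linarith
  · have := death_rate_lt_of_equilibrium (d := d2) one_pos ha hK1 hρ2 hx2.le hy2 hx1 hy1
      (by linear_combination hprey1) (by linear_combination hpred2)
    linarith

/-- **Nonexistence of interior equilibria of Model (1) (equal predation
rates, large death rates).**  Suppose `a₁ = a₂ = a > 0` and either
`d₁ > a + r·ρ₁` or `d₂ > a + ρ₂`.  Then Model (1) has no interior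
equilibrium. -/
theorem model1_no_interior_equilibrium_equal_a
    (r a K1 K2 d1 d2 ρ1 ρ2 : ℝ)
    (hr : 0 < r) (ha : 0 < a) (hK1 : 0 < K1) (hK2 : 0 < K2)
    (hd1 : 0 < d1) (hd2 : 0 < d2) (hρ1 : 0 ≤ ρ1) (hρ2 : 0 ≤ ρ2)
    (hcase : d1 > a + r * ρ1 ∨ d2 > a + ρ2) :
    ¬ ∃ x1 y1 x2 y2 : ℝ, 0 < x1 ∧ 0 < y1 ∧ 0 < x2 ∧ 0 < y2 ∧
        x1 * (1 - x1 / K1) - a * x1 * y1 / (1 + x1) = 0 ∧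
        a * x1 * y1 / (1 + x1) - d1 * y1 +
          ρ1 * (a * x1 * y1 * y2 / (1 + x1) - a * x2 * y1 * y2 / (1 + x2)) = 0 ∧
        r * x2 * (1 - x2 / K2) - a * x2 * y2 / (1 + x2) = 0 ∧
        a * x2 * y2 / (1 + x2) - d2 * y2 +
          ρ2 * (a * x2 * y1 * y2 / (1 + x2) - a * x1 * y1 * y2 / (1 + x1)) = 0 :=
  model1_no_interior_equilibrium_equal_a_general r a K1 K2 d1 d2 ρ1 ρ2 hr ha hK1 hK2 hρ1 hρ2 hcase
end

section
/- Suppose d_1 = d_2 = d > 0 with a_1 > d and a_2 > d, and set μ_1 = d/(a_1 − d), μ_2 = d/(a_2 − d), ν_1 = (K_1 − μ_1)(1 + μ_1)/(a_1K_1), ν_2 = r(K_2 − μ_2)(1 + μ_2)/(a_2K_2). If 0 < μ_i < K_i for both i = 1 and i = 2, then E^i = (μ_1, ν_1, μ_2, ν_2) is an interior equilibrium of Model (1): all four coordinates are strictly positive and all four right-hand sides of Model (1) vanish at E^i. -/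
/-! At `x = μᵢ` the Holling response `aᵢx/(1 + x)` equals the common death rate `d`, so each predator
equation reduces to its migration term, and the two migration terms are then both `d ν₁ ν₂` and cancel.
Each `νᵢ` is read off from the prey nullcline `rᵢ(1 − x/Kᵢ)(1 + x) = aᵢ y`. -/

lemma mul_eq_mul_one_add_of_eq_div_sub {a d μ : ℝ} (hμ : μ = d / (a - d)) (had : a ≠ d) :
    a * μ = d * (1 + μ) := by
  have : a - d ≠ 0 := sub_ne_zero.mpr had
  rw [hμ]
  field_simp
  ring

lemma logistic_sub_holling_eq_zero {r K a μ ν : ℝ} (hK : K ≠ 0) (ha : a ≠ 0) (hμ : 1 + μ ≠ 0)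
    (hν : ν = r * (K - μ) * (1 + μ) / (a * K)) :
    r * μ * (1 - μ / K) - a * μ * ν / (1 + μ) = 0 := by
  rw [hν]
  field_simp
  ring

lemma predator_rhs_eq_zero_of_break_even {a₁ a₂ d μ₁ μ₂ : ℝ} (ρ y₁ y₂ : ℝ)
    (h₁ : a₁ * μ₁ = d * (1 + μ₁)) (h₂ : a₂ * μ₂ = d * (1 + μ₂))
    (hμ₁ : 1 + μ₁ ≠ 0) (hμ₂ : 1 + μ₂ ≠ 0) :
    a₁ * μ₁ * y₁ / (1 + μ₁) - d * y₁ +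
      ρ * (a₁ * μ₁ * y₁ * y₂ / (1 + μ₁) - a₂ * μ₂ * y₁ * y₂ / (1 + μ₂)) = 0 := by
  field_simp
  linear_combination (1 + μ₂) * (y₁ + ρ * y₁ * y₂) * h₁ - ρ * (1 + μ₁) * y₁ * y₂ * h₂

theorem model1_symmetric_death_interior_equilibrium_general
    (r a1 a2 K1 K2 d ρ1 ρ2 : ℝ)
    (hr : 0 < r) (ha1 : 0 < a1) (ha2 : 0 < a2) (hK1 : 0 < K1) (hK2 : 0 < K2)
    (ha1d : a1 > d) (ha2d : a2 > d)
    (μ1 μ2 ν1 ν2 : ℝ)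
    (hμ1 : μ1 = d / (a1 - d)) (hμ2 : μ2 = d / (a2 - d))
    (hν1 : ν1 = (K1 - μ1) * (1 + μ1) / (a1 * K1))
    (hν2 : ν2 = r * (K2 - μ2) * (1 + μ2) / (a2 * K2))
    (h1 : 0 < μ1 ∧ μ1 < K1) (h2 : 0 < μ2 ∧ μ2 < K2) :
    (0 < μ1 ∧ 0 < ν1 ∧ 0 < μ2 ∧ 0 < ν2) ∧
    μ1 * (1 - μ1 / K1) - a1 * μ1 * ν1 / (1 + μ1) = 0 ∧
    a1 * μ1 * ν1 / (1 + μ1) - d * ν1 +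
      ρ1 * (a1 * μ1 * ν1 * ν2 / (1 + μ1) - a2 * μ2 * ν1 * ν2 / (1 + μ2)) = 0 ∧
    r * μ2 * (1 - μ2 / K2) - a2 * μ2 * ν2 / (1 + μ2) = 0 ∧
    a2 * μ2 * ν2 / (1 + μ2) - d * ν2 +
      ρ2 * (a2 * μ2 * ν1 * ν2 / (1 + μ2) - a1 * μ1 * ν1 * ν2 / (1 + μ1)) = 0 := by
  obtain ⟨hμ1pos, hμ1K⟩ := h1
  obtain ⟨hμ2pos, hμ2K⟩ := h2
  have hν1pos : 0 < ν1 := hν1 ▸ by have := sub_pos.mpr hμ1K; positivity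
  have hν2pos : 0 < ν2 := hν2 ▸ by have := sub_pos.mpr hμ2K; positivity
  have h1ne : 1 + μ1 ≠ 0 := by positivity
  have h2ne : 1 + μ2 ≠ 0 := by positivity
  have hbreak1 := mul_eq_mul_one_add_of_eq_div_sub hμ1 ha1d.ne'
  have hbreak2 := mul_eq_mul_one_add_of_eq_div_sub hμ2 ha2d.ne'
  refine ⟨⟨hμ1pos, hν1pos, hμ2pos, hν2pos⟩, ?_, ?_, ?_, ?_⟩
  · simpa only [one_mul] using logistic_sub_holling_eq_zero (r := 1) hK1.ne' ha1.ne' h1ne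
      (by rw [hν1, one_mul])
  · exact predator_rhs_eq_zero_of_break_even ρ1 ν1 ν2 hbreak1 hbreak2 h1ne h2ne
  · exact logistic_sub_holling_eq_zero hK2.ne' ha2.ne' h2ne hν2
  · linear_combination predator_rhs_eq_zero_of_break_even ρ2 ν2 ν1 hbreak2 hbreak1 h2ne h1ne

/-- **An explicit interior equilibrium of Model (1) when `d₁ = d₂ = d`.**
With `μᵢ = d/(aᵢ − d)`, `ν₁ = (K₁ − μ₁)(1 + μ₁)/(a₁K₁)`,
`ν₂ = r(K₂ − μ₂)(1 + μ₂)/(a₂K₂)`, if `0 < μᵢ < Kᵢ` for `i = 1, 2` then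
`Eⁱ = (μ₁, ν₁, μ₂, ν₂)` is an interior equilibrium of Model (1). -/
theorem model1_symmetric_death_interior_equilibrium
    (r a1 a2 K1 K2 d ρ1 ρ2 : ℝ)
    (hr : 0 < r) (ha1 : 0 < a1) (ha2 : 0 < a2) (hK1 : 0 < K1) (hK2 : 0 < K2)
    (hd : 0 < d) (hρ1 : 0 ≤ ρ1) (hρ2 : 0 ≤ ρ2)
    (ha1d : a1 > d) (ha2d : a2 > d)
    (μ1 μ2 ν1 ν2 : ℝ)
    (hμ1 : μ1 = d / (a1 - d)) (hμ2 : μ2 = d / (a2 - d))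
    (hν1 : ν1 = (K1 - μ1) * (1 + μ1) / (a1 * K1))
    (hν2 : ν2 = r * (K2 - μ2) * (1 + μ2) / (a2 * K2))
    (h1 : 0 < μ1 ∧ μ1 < K1) (h2 : 0 < μ2 ∧ μ2 < K2) :
    (0 < μ1 ∧ 0 < ν1 ∧ 0 < μ2 ∧ 0 < ν2) ∧
    μ1 * (1 - μ1 / K1) - a1 * μ1 * ν1 / (1 + μ1) = 0 ∧
    a1 * μ1 * ν1 / (1 + μ1) - d * ν1 +
      ρ1 * (a1 * μ1 * ν1 * ν2 / (1 + μ1) - a2 * μ2 * ν1 * ν2 / (1 + μ2)) = 0 ∧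
    r * μ2 * (1 - μ2 / K2) - a2 * μ2 * ν2 / (1 + μ2) = 0 ∧
    a2 * μ2 * ν2 / (1 + μ2) - d * ν2 +
      ρ2 * (a2 * μ2 * ν1 * ν2 / (1 + μ2) - a1 * μ1 * ν1 * ν2 / (1 + μ1)) = 0 :=
  model1_symmetric_death_interior_equilibrium_general r a1 a2 K1 K2 d ρ1 ρ2 hr ha1 ha2 hK1 hK2 ha1d
    ha2d μ1 μ2 ν1 ν2 hμ1 hμ2 hν1 hν2 h1 h2
end

section
/- Suppose d_1 = d_2 = d > 0 with a_1 > d and a_2 > d, and set μ_i = d/(a_i − d), ν_1 = (K_1 − μ_1)(1 + μ_1)/(a_1K_1), ν_2 = r(K_2 − μ_2)(1 + μ_2)/(a_2K_2). If (K_i − 1)/2 < μ_i < K_i for both i = 1 and i = 2, then every complex root of the characteristic polynomial of the Jacobian matrix of the right-hand side of Model (1) evaluated at the interior equilibrium E^i = (μ_1, ν_1, μ_2, ν_2) has strictly negative real part (so E^i is locally asymptotically stable). -/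
open Polynomial

/-- The right-hand side of Model (1), as a vector field on `ℝ⁴`,
with coordinates `p = (x₁, y₁, x₂, y₂)`. -/
noncomputable def model1RHS (r a1 a2 K1 K2 d1 d2 ρ1 ρ2 : ℝ)
    (p : Fin 4 → ℝ) : Fin 4 → ℝ :=
  ![p 0 * (1 - p 0 / K1) - a1 * p 0 * p 1 / (1 + p 0),
    a1 * p 0 * p 1 / (1 + p 0) - d1 * p 1 +
      ρ1 * (a1 * p 0 * p 1 * p 3 / (1 + p 0) - a2 * p 2 * p 1 * p 3 / (1 + p 2)),
    r * p 2 * (1 - p 2 / K2) - a2 * p 2 * p 3 / (1 + p 2),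
    a2 * p 2 * p 3 / (1 + p 2) - d2 * p 3 +
      ρ2 * (a2 * p 2 * p 1 * p 3 / (1 + p 2) - a1 * p 0 * p 1 * p 3 / (1 + p 0))]

/-- The Jacobian matrix of the right-hand side of Model (1): the `4 × 4`
matrix of partial derivatives with respect to `(x₁, y₁, x₂, y₂)`. -/
noncomputable def model1Jacobian (r a1 a2 K1 K2 d1 d2 ρ1 ρ2 : ℝ)
    (p : Fin 4 → ℝ) : Matrix (Fin 4) (Fin 4) ℝ :=
  Matrix.of fun i j =>
    fderiv ℝ (fun q : Fin 4 → ℝ => model1RHS r a1 a2 K1 K2 d1 d2 ρ1 ρ2 q i) p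
      (Pi.single j 1)

/-!
At `Eⁱ` the predator equations balance, `aᵢ μᵢ / (1 + μᵢ) = d`, so the Jacobian takes the form
`coupledJacobian α₁ α₂ d P Q R S`, with `αᵢ > 0` exactly because `(Kᵢ - 1)/2 < μᵢ`. Its
characteristic polynomial `(z² + α₁ z + d P)(z² + α₂ z + d S) - d² Q R` is a quartic with positive
coefficients whose Hurwitz determinant `a b c - c² - a² e` is a sum of nonnegative terms, so the
Routh–Hurwitz criterion applies. That criterion is proved directly: at a root `x + i y` with
`x ≥ 0` and `y ≠ 0`, eliminating `y²` between the real and imaginary parts leaves a polynomial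
identity in `x`, and `a²` times its left side is `-(a b c - c² - a² e)(4x + a)²` minus a polynomial
in `x` with nonnegative coefficients.
-/

theorem HasFDerivAt.div {𝕜 E : Type*} [NontriviallyNormedField 𝕜] [NormedAddCommGroup E]
    [NormedSpace 𝕜 E] {f g : E → 𝕜} {f' g' : E →L[𝕜] 𝕜} {x : E}
    (hf : HasFDerivAt f f' x) (hg : HasFDerivAt g g' x) (hx : g x ≠ 0) :
    HasFDerivAt (fun y => f y / g y) ((g x)⁻¹ • f' - (f x / g x ^ 2) • g') x := by
  simp only [div_eq_mul_inv]
  refine (hf.mul ((hasDerivAt_inv hx).comp_hasFDerivAt x hg)).congr_fderiv ?_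
  ext v
  simp only [Function.comp_apply, add_apply, smul_apply, smul_eq_mul, neg_mul, mul_neg, sub_apply]
  ring

theorem model1Jacobian_eq (r a1 a2 K1 K2 d1 d2 ρ1 ρ2 : ℝ) (hK1 : K1 ≠ 0) (hK2 : K2 ≠ 0)
    (p : Fin 4 → ℝ) (h0 : 1 + p 0 ≠ 0) (h2 : 1 + p 2 ≠ 0) :
    model1Jacobian r a1 a2 K1 K2 d1 d2 ρ1 ρ2 p =
    !![1 - 2*p 0/K1 - a1*p 1/(1+p 0)^2, -(a1*p 0/(1+p 0)), 0, 0;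
       a1*p 1*(1+ρ1*p 3)/(1+p 0)^2,
         a1*p 0/(1+p 0) - d1 + ρ1*p 3*(a1*p 0/(1+p 0) - a2*p 2/(1+p 2)),
         -(ρ1*a2*p 1*p 3/(1+p 2)^2), ρ1*p 1*(a1*p 0/(1+p 0) - a2*p 2/(1+p 2));
       0, 0, r*(1-2*p 2/K2) - a2*p 3/(1+p 2)^2, -(a2*p 2/(1+p 2));
       -(ρ2*a1*p 1*p 3/(1+p 0)^2), ρ2*p 3*(a2*p 2/(1+p 2) - a1*p 0/(1+p 0)),
         a2*p 3*(1+ρ2*p 1)/(1+p 2)^2,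
         a2*p 2/(1+p 2) - d2 + ρ2*p 1*(a2*p 2/(1+p 2) - a1*p 0/(1+p 0))] := by
  have x := fun i => hasFDerivAt_apply (𝕜 := ℝ) i p
  have c := fun k : ℝ => hasFDerivAt_const (𝕜 := ℝ) k p
  have H0 : HasFDerivAt (fun q => model1RHS r a1 a2 K1 K2 d1 d2 ρ1 ρ2 q 0) _ p :=
    ((x 0).mul ((c 1).sub ((x 0).div (c K1) hK1))).sub
      ((((c a1).mul (x 0)).mul (x 1)).div ((c 1).add (x 0)) h0)
  have H1 : HasFDerivAt (fun q => model1RHS r a1 a2 K1 K2 d1 d2 ρ1 ρ2 q 1) _ p :=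
    (((((c a1).mul (x 0)).mul (x 1)).div ((c 1).add (x 0)) h0).sub ((c d1).mul (x 1))).add
      ((c ρ1).mul (((((c a1).mul (x 0)).mul (x 1)).mul (x 3)).div ((c 1).add (x 0)) h0 |>.sub
        (((((c a2).mul (x 2)).mul (x 1)).mul (x 3)).div ((c 1).add (x 2)) h2)))
  have H2 : HasFDerivAt (fun q => model1RHS r a1 a2 K1 K2 d1 d2 ρ1 ρ2 q 2) _ p :=
    (((c r).mul (x 2)).mul ((c 1).sub ((x 2).div (c K2) hK2))).sub
      ((((c a2).mul (x 2)).mul (x 3)).div ((c 1).add (x 2)) h2)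
  have H3 : HasFDerivAt (fun q => model1RHS r a1 a2 K1 K2 d1 d2 ρ1 ρ2 q 3) _ p :=
    (((((c a2).mul (x 2)).mul (x 3)).div ((c 1).add (x 2)) h2).sub ((c d2).mul (x 3))).add
      ((c ρ2).mul (((((c a2).mul (x 2)).mul (x 1)).mul (x 3)).div ((c 1).add (x 2)) h2 |>.sub
        (((((c a1).mul (x 0)).mul (x 1)).mul (x 3)).div ((c 1).add (x 0)) h0)))
  ext i j
  fin_cases i <;> fin_cases j <;>
    simp [model1Jacobian, H0.fderiv, H1.fderiv, H2.fderiv, H3.fderiv] <;> (try field_simp) <;> ring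

theorem one_add_ne_zero_of_eq_div_sub {a d μ : ℝ} (ha : a ≠ 0) (had : a ≠ d)
    (hμ : μ = d / (a - d)) : 1 + μ ≠ 0 := by
  have : a - d ≠ 0 := sub_ne_zero.2 had
  rw [hμ, one_add_div this, sub_add_cancel]
  exact div_ne_zero ha this

theorem mul_div_one_add_eq_of_eq_div_sub {a d μ : ℝ} (ha : a ≠ 0) (had : a ≠ d)
    (hμ : μ = d / (a - d)) : a * μ / (1 + μ) = d := by
  have : a - d ≠ 0 := sub_ne_zero.2 had
  rw [div_eq_iff (one_add_ne_zero_of_eq_div_sub ha had hμ), hμ]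
  field_simp
  ring

theorem re_neg_of_quartic_eq_zero {a b c e : ℝ} (ha : 0 < a) (hb : 0 < b) (hc : 0 < c)
    (he : 0 < e) (hΔ : c ^ 2 + a ^ 2 * e < a * b * c) {z : ℂ}
    (hz : z ^ 4 + a * z ^ 3 + b * z ^ 2 + c * z + e = 0) : z.re < 0 := by
  obtain ⟨x, y⟩ := z
  by_contra! hx
  simp only at hx
  have hzRe := congrArg Complex.re hz
  have hzIm := congrArg Complex.im hz
  simp only [pow_succ, pow_zero, one_mul, Complex.add_re, Complex.add_im, Complex.mul_re,
    Complex.mul_im, Complex.ofReal_re, Complex.ofReal_im, zero_mul, sub_zero, add_zero,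
    Complex.zero_re, Complex.zero_im] at hzRe hzIm
  have hRe : x^4 + a*x^3 + b*x^2 + c*x + e - (6*x^2 + 3*a*x + b) * y^2 + y^4 = 0 := by
    linear_combination hzRe
  have hIm : y * ((4*x^3 + 3*a*x^2 + 2*b*x + c) - y^2 * (4*x + a)) = 0 := by
    linear_combination hzIm
  rcases mul_eq_zero.mp hIm with rfl | hN
  · have : 0 < x^4 + a*x^3 + b*x^2 + c*x + e := by positivity
    linarith
  · set N := 4*x^3 + 3*a*x^2 + 2*b*x + c
    set S := 4*x + a
    set Q := 6*x^2 + 3*a*x + b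
    set P := x^4 + a*x^3 + b*x^2 + c*x + e
    have hF : N^2 - Q*N*S + P*S^2 = 0 := by
      linear_combination (N + y^2*S - Q*S) * hN + S^2 * hRe
    obtain ⟨D, hD, key⟩ : ∃ D ≥ 0, a^2*(N^2 - Q*N*S + P*S^2) = -(a*b*c - c^2 - a^2*e)*S^2 - D :=
      ⟨64*a^2*x^6 + 96*a^3*x^5 + (32*a^2*b+48*a^4)*x^4 + (32*a^3*b+8*a^5)*x^3
        + (4*(a*b-2*c)^2 + 4*a^3*c + 8*a^4*b)*x^2 + (2*a*(a*b-2*c)^2 + 2*a^4*c)*x,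
        by positivity, by ring⟩
    have : 0 < (a*b*c - c^2 - a^2*e)*S^2 := by
      have : 0 < S := by positivity
      have : 0 < a*b*c - c^2 - a^2*e := by linarith
      positivity
    rw [hF] at key
    linarith

def coupledJacobian (α₁ α₂ d P Q R S : ℝ) : Matrix (Fin 4) (Fin 4) ℝ :=
  !![-α₁, -d, 0, 0; P, 0, -Q, 0; 0, 0, -α₂, -d; -R, 0, S, 0]

theorem coupledJacobian_charpoly (α₁ α₂ d P Q R S : ℝ) :
    (coupledJacobian α₁ α₂ d P Q R S).charpoly =
      (X ^ 2 + C α₁ * X + C (d * P)) * (X ^ 2 + C α₂ * X + C (d * S)) - C (d ^ 2 * Q * R) := by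
  simp [Matrix.charpoly, Matrix.det_succ_row_zero, Fin.sum_univ_succ, coupledJacobian,
    Matrix.charmatrix_apply, Fin.succAbove]
  ring

theorem coupledJacobian_root_re_neg {α₁ α₂ d P Q R S : ℝ} (hα₁ : 0 < α₁) (hα₂ : 0 < α₂)
    (hd : 0 < d) (hP : 0 < P) (hS : 0 < S) (hQ : 0 ≤ Q) (hR : 0 ≤ R) (hQR : Q * R < P * S)
    {z : ℂ} (hz : ((coupledJacobian α₁ α₂ d P Q R S).charpoly.map (algebraMap ℝ ℂ)).IsRoot z) :
    z.re < 0 := by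
  have hquartic : z ^ 4 + ((α₁ + α₂ : ℝ) : ℂ) * z ^ 3 + ((α₁ * α₂ + d * P + d * S : ℝ) : ℂ) * z ^ 2
      + ((d * (α₁ * S + α₂ * P) : ℝ) : ℂ) * z + ((d ^ 2 * (P * S - Q * R) : ℝ) : ℂ) = 0 := by
    simp only [coupledJacobian_charpoly, IsRoot, eval_map_algebraMap, aeval_sub, map_mul, map_add,
      map_pow, aeval_X, aeval_C, Complex.coe_algebraMap] at hz
    push_cast
    linear_combination hz
  refine re_neg_of_quartic_eq_zero (by positivity) (by positivity) (by positivity)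
    (mul_pos (pow_pos hd 2) (sub_pos.2 hQR)) ?_ hquartic
  have hurwitz : (α₁ + α₂) * (α₁ * α₂ + d * P + d * S) * (d * (α₁ * S + α₂ * P))
      - ((d * (α₁ * S + α₂ * P)) ^ 2 + (α₁ + α₂) ^ 2 * (d ^ 2 * (P * S - Q * R)))
      = d * α₁ * α₂ * (α₁ + α₂) * (α₁ * S + α₂ * P) + d ^ 2 * α₁ * α₂ * (P - S) ^ 2
        + d ^ 2 * (α₁ + α₂) ^ 2 * (Q * R) := by
    ring
  have : 0 < d * α₁ * α₂ * (α₁ + α₂) * (α₁ * S + α₂ * P) := by positivity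
  have : 0 ≤ d ^ 2 * α₁ * α₂ * (P - S) ^ 2 := by positivity
  have : 0 ≤ d ^ 2 * (α₁ + α₂) ^ 2 * (Q * R) := by positivity
  linarith

theorem coupling_mul_lt {β₁ β₂ ρ₁ ρ₂ ν₁ ν₂ : ℝ} (hβ₁ : 0 < β₁) (hβ₂ : 0 < β₂)
    (hρ₁ : 0 ≤ ρ₁) (hρ₂ : 0 ≤ ρ₂) (hν₁ : 0 < ν₁) (hν₂ : 0 < ν₂) :
    ρ₁ * β₂ * ν₁ * (ρ₂ * β₁ * ν₂) < β₁ * (1 + ρ₁ * ν₂) * (β₂ * (1 + ρ₂ * ν₁)) := by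
  have : 0 < β₁ * β₂ * (1 + ρ₁ * ν₂ + ρ₂ * ν₁) := by positivity
  linear_combination this

theorem model1Jacobian_interiorEquilibrium_eq {r a1 a2 K1 K2 d ρ1 ρ2 μ1 μ2 ν1 ν2 : ℝ}
    (ha1 : a1 ≠ 0) (ha2 : a2 ≠ 0) (hK1 : K1 ≠ 0) (hK2 : K2 ≠ 0) (ha1d : a1 ≠ d) (ha2d : a2 ≠ d)
    (hμ1 : μ1 = d / (a1 - d)) (hμ2 : μ2 = d / (a2 - d))
    (hν1 : ν1 = (K1 - μ1) * (1 + μ1) / (a1 * K1))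
    (hν2 : ν2 = r * (K2 - μ2) * (1 + μ2) / (a2 * K2)) :
    model1Jacobian r a1 a2 K1 K2 d d ρ1 ρ2 ![μ1, ν1, μ2, ν2] =
      coupledJacobian (μ1 * (2 * μ1 + 1 - K1) / (K1 * (1 + μ1)))
        (r * μ2 * (2 * μ2 + 1 - K2) / (K2 * (1 + μ2))) d
        (a1 * ν1 / (1 + μ1) ^ 2 * (1 + ρ1 * ν2)) (ρ1 * (a2 * ν2 / (1 + μ2) ^ 2) * ν1)
        (ρ2 * (a1 * ν1 / (1 + μ1) ^ 2) * ν2) (a2 * ν2 / (1 + μ2) ^ 2 * (1 + ρ2 * ν1)) := by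
  have h1μ1 := one_add_ne_zero_of_eq_div_sub ha1 ha1d hμ1
  have h1μ2 := one_add_ne_zero_of_eq_div_sub ha2 ha2d hμ2
  have hf1 := mul_div_one_add_eq_of_eq_div_sub ha1 ha1d hμ1
  have hf2 := mul_div_one_add_eq_of_eq_div_sub ha2 ha2d hμ2
  rw [model1Jacobian_eq r a1 a2 K1 K2 d d ρ1 ρ2 hK1 hK2 _ h1μ1 h1μ2]
  ext i j
  fin_cases i <;> fin_cases j <;> simp [coupledJacobian, hf1, hf2]
  all_goals first | ring1 | (subst hν1 hν2; field_simp; ring)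

/-- **Local asymptotic stability of the interior equilibrium
`Eⁱ = (μ₁, ν₁, μ₂, ν₂)` when `d₁ = d₂ = d`.**  If `(Kᵢ − 1)/2 < μᵢ < Kᵢ` for
both `i = 1, 2`, then every complex root of the characteristic polynomial of
the Jacobian of Model (1) at `Eⁱ` has strictly negative real part. -/
theorem model1_interior_equilibrium_stable
    (r a1 a2 K1 K2 d ρ1 ρ2 : ℝ)
    (hr : 0 < r) (ha1 : 0 < a1) (ha2 : 0 < a2) (hK1 : 0 < K1) (hK2 : 0 < K2)
    (hd : 0 < d) (hρ1 : 0 ≤ ρ1) (hρ2 : 0 ≤ ρ2)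
    (ha1d : a1 > d) (ha2d : a2 > d)
    (μ1 μ2 ν1 ν2 : ℝ)
    (hμ1 : μ1 = d / (a1 - d)) (hμ2 : μ2 = d / (a2 - d))
    (hν1 : ν1 = (K1 - μ1) * (1 + μ1) / (a1 * K1))
    (hν2 : ν2 = r * (K2 - μ2) * (1 + μ2) / (a2 * K2))
    (h1 : (K1 - 1) / 2 < μ1 ∧ μ1 < K1)
    (h2 : (K2 - 1) / 2 < μ2 ∧ μ2 < K2) :
    ∀ z : ℂ,
      ((model1Jacobian r a1 a2 K1 K2 d d ρ1 ρ2 ![μ1, ν1, μ2, ν2]).charpoly.map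
        (algebraMap ℝ ℂ)).IsRoot z → z.re < 0 := by
  intro z hz
  have hμ1pos : 0 < μ1 := hμ1 ▸ div_pos hd (sub_pos.2 ha1d)
  have hμ2pos : 0 < μ2 := hμ2 ▸ div_pos hd (sub_pos.2 ha2d)
  have hν1pos : 0 < ν1 := hν1 ▸ div_pos (mul_pos (sub_pos.2 h1.2) (by positivity)) (by positivity)
  have hν2pos : 0 < ν2 :=
    hν2 ▸ div_pos (mul_pos (mul_pos hr (sub_pos.2 h2.2)) (by positivity)) (by positivity)
  have hα1 : 0 < μ1 * (2 * μ1 + 1 - K1) / (K1 * (1 + μ1)) :=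
    div_pos (mul_pos hμ1pos (by linarith [h1.1])) (by positivity)
  have hα2 : 0 < r * μ2 * (2 * μ2 + 1 - K2) / (K2 * (1 + μ2)) :=
    div_pos (mul_pos (mul_pos hr hμ2pos) (by linarith [h2.1])) (by positivity)
  rw [model1Jacobian_interiorEquilibrium_eq ha1.ne' ha2.ne' hK1.ne' hK2.ne' ha1d.ne' ha2d.ne'
    hμ1 hμ2 hν1 hν2] at hz
  exact coupledJacobian_root_re_neg hα1 hα2 hd (by positivity) (by positivity) (by positivity)
    (by positivity) (coupling_mul_lt (by positivity) (by positivity) hρ1 hρ2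
      hν1pos hν2pos) hz
end

section
/- Suppose d_1 = d_2 = d > 0 with a_1 > d and a_2 > d, 0 < μ_i < K_i for both i = 1, 2 (where μ_i = d/(a_i − d)), and μ_1(K_1a_1 − a_1 − K_1d − d)/(a_1K_1) + r·μ_2(K_2a_2 − a_2 − K_2d − d)/(a_2K_2) > 0. Then the characteristic polynomial of the Jacobian matrix of the right-hand side of Model (1) evaluated at the interior equilibrium E^i = (μ_1, ν_1, μ_2, ν_2) has a complex root with strictly positive real part (so E^i is unstable). -/
open Polynomial

/-!
At `Eⁱ` each Holling term `aᵢμᵢ/(1 + μᵢ)` equals `d`, so the `y`-diagonal entries of the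
Jacobian vanish, `ρ`-terms included, and the trace of the Jacobian is exactly the left-hand
side of the instability condition. The trace of a real matrix is the sum of the complex
roots of its characteristic polynomial, so a positive trace forces a root with positive real part.
-/

theorem Matrix.exists_charpoly_root_re_pos_of_trace_pos {n : Type*} [Fintype n] [DecidableEq n]
    (A : Matrix n n ℝ) (hA : 0 < A.trace) :
    ∃ z : ℂ, (A.charpoly.map (algebraMap ℝ ℂ)).IsRoot z ∧ 0 < z.re := by
  rw [← Matrix.charpoly_map]
  by_contra! h
  set roots := (A.map (algebraMap ℝ ℂ)).charpoly.roots
  have htrace : A.trace = (roots.map Complex.re).sum := by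
    rw [← Complex.coe_reAddGroupHom, ← map_multiset_sum, Complex.coe_reAddGroupHom,
      ← Matrix.trace_eq_sum_roots_charpoly, ← AddMonoidHom.map_trace]
    rfl
  have hle := Multiset.sum_le_card_nsmul (roots.map Complex.re) 0 fun x hx => by
    obtain ⟨z, hz, rfl⟩ := Multiset.mem_map.1 hx
    exact h z (isRoot_of_mem_roots hz)
  rw [nsmul_zero] at hle
  linarith

theorem fderiv_single_eq_deriv_update {n : Type*} [Fintype n] [DecidableEq n]
    {f : (n → ℝ) → ℝ} {p : n → ℝ} (hf : DifferentiableAt ℝ f p) (j : n) :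
    fderiv ℝ f p (Pi.single j 1) = deriv (fun t => f (Function.update p j t)) (p j) :=
  (hf.hasFDerivAt.comp_hasDerivAt_of_eq (p j) (hasDerivAt_update p j (p j))
    (Function.update_eq_self j p).symm).deriv.symm

theorem hasDerivAt_logistic_sub_holling (r K a y x : ℝ) (hx : 1 + x ≠ 0) :
    HasDerivAt (fun t => r * t * (1 - t / K) - a * t * y / (1 + t))
      (r - 2 * r * x / K - a * y / (1 + x) ^ 2) x := by
  have hid := hasDerivAt_id' x
  refine (((hid.const_mul r).mul ((hid.div_const K).const_sub 1)).sub
    (((hid.const_mul a).mul_const y).div (hid.const_add 1) hx)).congr_deriv ?_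
  field_simp
  ring

section Model1

variable (r a1 a2 K1 K2 d1 d2 ρ1 ρ2 : ℝ) {p : Fin 4 → ℝ}

theorem differentiableAt_model1RHS (h0 : 1 + p 0 ≠ 0) (h2 : 1 + p 2 ≠ 0) (i : Fin 4) :
    DifferentiableAt ℝ (fun q => model1RHS r a1 a2 K1 K2 d1 d2 ρ1 ρ2 q i) p := by
  fin_cases i <;>
    simp only [model1RHS, Fin.zero_eta, Fin.mk_one, Fin.reduceFinMk, Matrix.cons_val] <;>
    fun_prop (disch := assumption)

theorem model1Jacobian_apply_self (h0 : 1 + p 0 ≠ 0) (h2 : 1 + p 2 ≠ 0) (i : Fin 4) :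
    model1Jacobian r a1 a2 K1 K2 d1 d2 ρ1 ρ2 p i i =
      deriv (fun t => model1RHS r a1 a2 K1 K2 d1 d2 ρ1 ρ2 (Function.update p i t) i) (p i) :=
  fderiv_single_eq_deriv_update (differentiableAt_model1RHS r a1 a2 K1 K2 d1 d2 ρ1 ρ2 h0 h2 i) i

theorem model1Jacobian_apply_zero_zero (h0 : 1 + p 0 ≠ 0) (h2 : 1 + p 2 ≠ 0) :
    model1Jacobian r a1 a2 K1 K2 d1 d2 ρ1 ρ2 p 0 0 =
      1 - 2 * p 0 / K1 - a1 * p 1 / (1 + p 0) ^ 2 := by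
  rw [model1Jacobian_apply_self r a1 a2 K1 K2 d1 d2 ρ1 ρ2 h0 h2]
  simpa [model1RHS] using (hasDerivAt_logistic_sub_holling 1 K1 a1 (p 1) (p 0) h0).deriv

theorem model1Jacobian_apply_two_two (h0 : 1 + p 0 ≠ 0) (h2 : 1 + p 2 ≠ 0) :
    model1Jacobian r a1 a2 K1 K2 d1 d2 ρ1 ρ2 p 2 2 =
      r - 2 * r * p 2 / K2 - a2 * p 3 / (1 + p 2) ^ 2 := by
  rw [model1Jacobian_apply_self r a1 a2 K1 K2 d1 d2 ρ1 ρ2 h0 h2]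
  simpa [model1RHS] using (hasDerivAt_logistic_sub_holling r K2 a2 (p 3) (p 2) h2).deriv

theorem model1Jacobian_apply_one_one (h0 : 1 + p 0 ≠ 0) (h2 : 1 + p 2 ≠ 0) :
    model1Jacobian r a1 a2 K1 K2 d1 d2 ρ1 ρ2 p 1 1 =
      a1 * p 0 / (1 + p 0) - d1 + ρ1 * p 3 * (a1 * p 0 / (1 + p 0) - a2 * p 2 / (1 + p 2)) := by
  rw [model1Jacobian_apply_self r a1 a2 K1 K2 d1 d2 ρ1 ρ2 h0 h2]
  set c := a1 * p 0 / (1 + p 0) - d1 + ρ1 * p 3 * (a1 * p 0 / (1 + p 0) - a2 * p 2 / (1 + p 2))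
  have hlin : (fun t => model1RHS r a1 a2 K1 K2 d1 d2 ρ1 ρ2 (Function.update p 1 t) 1) =
      fun t => t * c := by
    funext t
    simp only [model1RHS, Matrix.cons_val, Function.update_self, Function.update_of_ne, ne_eq,
      Fin.reduceEq, zero_ne_one, not_false_eq_true, c]
    ring
  rw [hlin, (hasDerivAt_mul_const c).deriv]

theorem model1Jacobian_apply_three_three (h0 : 1 + p 0 ≠ 0) (h2 : 1 + p 2 ≠ 0) :
    model1Jacobian r a1 a2 K1 K2 d1 d2 ρ1 ρ2 p 3 3 =
      a2 * p 2 / (1 + p 2) - d2 + ρ2 * p 1 * (a2 * p 2 / (1 + p 2) - a1 * p 0 / (1 + p 0)) := by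
  rw [model1Jacobian_apply_self r a1 a2 K1 K2 d1 d2 ρ1 ρ2 h0 h2]
  set c := a2 * p 2 / (1 + p 2) - d2 + ρ2 * p 1 * (a2 * p 2 / (1 + p 2) - a1 * p 0 / (1 + p 0))
  have hlin : (fun t => model1RHS r a1 a2 K1 K2 d1 d2 ρ1 ρ2 (Function.update p 3 t) 3) =
      fun t => t * c := by
    funext t
    simp only [model1RHS, Matrix.cons_val, Function.update_self, Function.update_of_ne, ne_eq,
      Fin.reduceEq, not_false_eq_true, c]
    ring
  rw [hlin, (hasDerivAt_mul_const c).deriv]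

theorem model1Jacobian_trace (h0 : 1 + p 0 ≠ 0) (h2 : 1 + p 2 ≠ 0) :
    (model1Jacobian r a1 a2 K1 K2 d1 d2 ρ1 ρ2 p).trace =
      (1 - 2 * p 0 / K1 - a1 * p 1 / (1 + p 0) ^ 2) +
      (a1 * p 0 / (1 + p 0) - d1 + ρ1 * p 3 * (a1 * p 0 / (1 + p 0) - a2 * p 2 / (1 + p 2))) +
      (r - 2 * r * p 2 / K2 - a2 * p 3 / (1 + p 2) ^ 2) +
      (a2 * p 2 / (1 + p 2) - d2 + ρ2 * p 1 * (a2 * p 2 / (1 + p 2) - a1 * p 0 / (1 + p 0))) := by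
  rw [Matrix.trace, Fin.sum_univ_four]
  simp only [Matrix.diag_apply]
  rw [model1Jacobian_apply_zero_zero _ _ _ _ _ _ _ _ _ h0 h2,
    model1Jacobian_apply_one_one _ _ _ _ _ _ _ _ _ h0 h2,
    model1Jacobian_apply_two_two _ _ _ _ _ _ _ _ _ h0 h2,
    model1Jacobian_apply_three_three _ _ _ _ _ _ _ _ _ h0 h2]

end Model1

theorem one_add_eq_div_of_eq_div {a d μ : ℝ} (had : a - d ≠ 0) (hμ : μ = d / (a - d)) :
    1 + μ = a / (a - d) := by
  rw [hμ, one_add_div had, sub_add_cancel]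

theorem holling_eq_of_eq_div {a d μ : ℝ} (ha : a ≠ 0) (had : a - d ≠ 0)
    (hμ : μ = d / (a - d)) :
    a * μ / (1 + μ) = d := by
  rw [one_add_eq_div_of_eq_div had hμ, hμ]
  field_simp

theorem logistic_holling_derivative_eq {r a K d μ ν : ℝ} (ha : a ≠ 0) (hK : K ≠ 0)
    (had : a - d ≠ 0) (hμ : μ = d / (a - d)) (hν : ν = r * (K - μ) * (1 + μ) / (a * K)) :
    r - 2 * r * μ / K - a * ν / (1 + μ) ^ 2 = r * μ * (K * a - a - K * d - d) / (a * K) := by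
  rw [hν, one_add_eq_div_of_eq_div had hμ, hμ]
  field_simp
  ring

theorem model1Jacobian_trace_interiorEquilibrium (r a1 a2 K1 K2 d ρ1 ρ2 μ1 μ2 ν1 ν2 : ℝ)
    (ha1 : a1 ≠ 0) (ha2 : a2 ≠ 0) (hK1 : K1 ≠ 0) (hK2 : K2 ≠ 0)
    (ha1d : a1 - d ≠ 0) (ha2d : a2 - d ≠ 0)
    (hμ1 : μ1 = d / (a1 - d)) (hμ2 : μ2 = d / (a2 - d))
    (hν1 : ν1 = (K1 - μ1) * (1 + μ1) / (a1 * K1))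
    (hν2 : ν2 = r * (K2 - μ2) * (1 + μ2) / (a2 * K2)) :
    (model1Jacobian r a1 a2 K1 K2 d d ρ1 ρ2 ![μ1, ν1, μ2, ν2]).trace =
      μ1 * (K1 * a1 - a1 - K1 * d - d) / (a1 * K1) +
        r * μ2 * (K2 * a2 - a2 - K2 * d - d) / (a2 * K2) := by
  have h0 : 1 + μ1 ≠ 0 := by
    rw [one_add_eq_div_of_eq_div ha1d hμ1]
    exact div_ne_zero ha1 ha1d
  have h2 : 1 + μ2 ≠ 0 := by
    rw [one_add_eq_div_of_eq_div ha2d hμ2]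
    exact div_ne_zero ha2 ha2d
  rw [model1Jacobian_trace (p := ![μ1, ν1, μ2, ν2]) _ _ _ _ _ _ _ _ _ h0 h2]
  simp only [Matrix.cons_val]
  rw [holling_eq_of_eq_div ha1 ha1d hμ1, holling_eq_of_eq_div ha2 ha2d hμ2,
    logistic_holling_derivative_eq ha2 hK2 ha2d hμ2 hν2]
  have patch1 := logistic_holling_derivative_eq (r := 1) (ν := ν1) ha1 hK1 ha1d hμ1
    (by rw [hν1, one_mul])
  simp only [one_mul, mul_one] at patch1
  rw [patch1]
  ring

theorem model1_interior_equilibrium_unstable_general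
    (r a1 a2 K1 K2 d ρ1 ρ2 : ℝ)
    (ha1 : 0 < a1) (ha2 : 0 < a2) (hK1 : 0 < K1) (hK2 : 0 < K2)
    (ha1d : a1 > d) (ha2d : a2 > d)
    (μ1 μ2 ν1 ν2 : ℝ)
    (hμ1 : μ1 = d / (a1 - d)) (hμ2 : μ2 = d / (a2 - d))
    (hν1 : ν1 = (K1 - μ1) * (1 + μ1) / (a1 * K1))
    (hν2 : ν2 = r * (K2 - μ2) * (1 + μ2) / (a2 * K2))
    (hunst : μ1 * (K1 * a1 - a1 - K1 * d - d) / (a1 * K1) +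
      r * μ2 * (K2 * a2 - a2 - K2 * d - d) / (a2 * K2) > 0) :
    ∃ z : ℂ,
      ((model1Jacobian r a1 a2 K1 K2 d d ρ1 ρ2 ![μ1, ν1, μ2, ν2]).charpoly.map
        (algebraMap ℝ ℂ)).IsRoot z ∧ 0 < z.re := by
  refine Matrix.exists_charpoly_root_re_pos_of_trace_pos _ ?_
  rwa [model1Jacobian_trace_interiorEquilibrium r a1 a2 K1 K2 d ρ1 ρ2 μ1 μ2 ν1 ν2 ha1.ne'
    ha2.ne' hK1.ne' hK2.ne' (sub_ne_zero.2 ha1d.ne') (sub_ne_zero.2 ha2d.ne') hμ1 hμ2 hν1 hν2]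

/-- **Instability of the interior equilibrium `Eⁱ = (μ₁, ν₁, μ₂, ν₂)`
when `d₁ = d₂ = d`.**  If `0 < μᵢ < Kᵢ` for `i = 1, 2` and
`μ₁(K₁a₁ − a₁ − K₁d − d)/(a₁K₁) + r·μ₂(K₂a₂ − a₂ − K₂d − d)/(a₂K₂) > 0`,
then the characteristic polynomial of the Jacobian of Model (1) at `Eⁱ` has
a complex root with strictly positive real part. -/
theorem model1_interior_equilibrium_unstable
    (r a1 a2 K1 K2 d ρ1 ρ2 : ℝ)
    (hr : 0 < r) (ha1 : 0 < a1) (ha2 : 0 < a2) (hK1 : 0 < K1) (hK2 : 0 < K2)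
    (hd : 0 < d) (hρ1 : 0 ≤ ρ1) (hρ2 : 0 ≤ ρ2)
    (ha1d : a1 > d) (ha2d : a2 > d)
    (μ1 μ2 ν1 ν2 : ℝ)
    (hμ1 : μ1 = d / (a1 - d)) (hμ2 : μ2 = d / (a2 - d))
    (hν1 : ν1 = (K1 - μ1) * (1 + μ1) / (a1 * K1))
    (hν2 : ν2 = r * (K2 - μ2) * (1 + μ2) / (a2 * K2))
    (h1 : 0 < μ1 ∧ μ1 < K1) (h2 : 0 < μ2 ∧ μ2 < K2)
    (hunst : μ1 * (K1 * a1 - a1 - K1 * d - d) / (a1 * K1) +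
      r * μ2 * (K2 * a2 - a2 - K2 * d - d) / (a2 * K2) > 0) :
    ∃ z : ℂ,
      ((model1Jacobian r a1 a2 K1 K2 d d ρ1 ρ2 ![μ1, ν1, μ2, ν2]).charpoly.map
        (algebraMap ℝ ℂ)).IsRoot z ∧ 0 < z.re :=
  model1_interior_equilibrium_unstable_general r a1 a2 K1 K2 d ρ1 ρ2 ha1 ha2 hK1 hK2 ha1d ha2d μ1 μ2
    ν1 ν2 hμ1 hμ2 hν1 hν2 hunst
end

section
/- Suppose a_1 = a_2 = a, d_1 = d_2 = d, K_1 = K_2 = K, r = 1, with a > d > 0, and set μ = d/(a − d) and ν = (K − μ)(1 + μ)/(aK). If 0 < μ < K, then (μ, ν, μ, ν) is the unique interior equilibrium of Model (1): it is an interior equilibrium, and any point (x_1, y_1, x_2, y_2) with all four coordinates strictly positive at which all four right-hand sides of Model (1) vanish equals (μ, ν, μ, ν). -/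
/-!
Dividing the predator equation of patch `i` by `yᵢ > 0` leaves, with `g x = a x / (1 + x)`,
`g x₁ - d + ρ₁ y₂ (g x₁ - g x₂) = 0` and `g x₂ - d + ρ₂ y₁ (g x₂ - g x₁) = 0`.
Their difference is `(g x₁ - g x₂)(1 + ρ₁ y₂ + ρ₂ y₁) = 0`, so `g x₁ = g x₂ = d`, which forces
`x₁ = x₂ = μ`; the prey equations then determine `y₁ = y₂ = ν`.
-/

lemma eq_of_sub_add_mul_sub_eq_zero {u₁ u₂ d c₁ c₂ : ℝ} (hc₁ : 0 ≤ c₁) (hc₂ : 0 ≤ c₂)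
    (h₁ : u₁ - d + c₁ * (u₁ - u₂) = 0) (h₂ : u₂ - d + c₂ * (u₂ - u₁) = 0) :
    u₁ = d ∧ u₂ = d := by
  have hprod : (u₁ - u₂) * (1 + c₁ + c₂) = 0 := by linear_combination h₁ - h₂
  have hu : u₁ = u₂ := sub_eq_zero.mp ((mul_eq_zero.mp hprod).resolve_right (by positivity))
  subst hu
  constructor <;> linarith

lemma div_one_add_eq_iff {a d x : ℝ} (hx : 1 + x ≠ 0) (had : d ≠ a) :
    a * x / (1 + x) = d ↔ x = d / (a - d) := by
  have had' : a - d ≠ 0 := sub_ne_zero.mpr had.symm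
  rw [div_eq_iff hx, eq_div_iff had']
  constructor <;> intro h <;> linarith

lemma prey_rhs_eq_zero_iff {a K x y : ℝ} (ha : a ≠ 0) (hK : K ≠ 0) (hx : x ≠ 0)
    (h1x : 1 + x ≠ 0) :
    x * (1 - x / K) - a * x * y / (1 + x) = 0 ↔ y = (K - x) * (1 + x) / (a * K) := by
  have hfactor : x * (1 - x / K) - a * x * y / (1 + x) =
      x * a / (1 + x) * ((K - x) * (1 + x) / (a * K) - y) := by
    field_simp
  rw [hfactor, mul_eq_zero, or_iff_right (by positivity), sub_eq_zero, eq_comm]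

lemma predator_rhs_div_eq_zero {a d ρ x y x' y' : ℝ} (hy : y ≠ 0)
    (h : a * x * y / (1 + x) - d * y + ρ * (a * x * y * y' / (1 + x) - a * x' * y * y' / (1 + x'))
      = 0) :
    a * x / (1 + x) - d + ρ * y' * (a * x / (1 + x) - a * x' / (1 + x')) = 0 := by
  have hfactor : y * (a * x / (1 + x) - d + ρ * y' * (a * x / (1 + x) - a * x' / (1 + x'))) = 0 := by
    linear_combination h
  exact (mul_eq_zero.mp hfactor).resolve_left hy

theorem model1_symmetric_unique_interior_equilibrium_general
    (a K d ρ1 ρ2 : ℝ)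
    (ha : 0 < a) (hK : 0 < K) (hρ1 : 0 ≤ ρ1) (hρ2 : 0 ≤ ρ2)
    (had : d < a)
    (μ ν : ℝ) (hμ : μ = d / (a - d)) (hν : ν = (K - μ) * (1 + μ) / (a * K))
    (hμK : 0 < μ ∧ μ < K) :
    ((0 < μ ∧ 0 < ν) ∧
      μ * (1 - μ / K) - a * μ * ν / (1 + μ) = 0 ∧
      a * μ * ν / (1 + μ) - d * ν +
        ρ1 * (a * μ * ν * ν / (1 + μ) - a * μ * ν * ν / (1 + μ)) = 0 ∧
      1 * μ * (1 - μ / K) - a * μ * ν / (1 + μ) = 0 ∧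
      a * μ * ν / (1 + μ) - d * ν +
        ρ2 * (a * μ * ν * ν / (1 + μ) - a * μ * ν * ν / (1 + μ)) = 0) ∧
    (∀ x1 y1 x2 y2 : ℝ, 0 < x1 → 0 < y1 → 0 < x2 → 0 < y2 →
      x1 * (1 - x1 / K) - a * x1 * y1 / (1 + x1) = 0 →
      a * x1 * y1 / (1 + x1) - d * y1 +
        ρ1 * (a * x1 * y1 * y2 / (1 + x1) - a * x2 * y1 * y2 / (1 + x2)) = 0 →
      1 * x2 * (1 - x2 / K) - a * x2 * y2 / (1 + x2) = 0 →
      a * x2 * y2 / (1 + x2) - d * y2 +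
        ρ2 * (a * x2 * y1 * y2 / (1 + x2) - a * x1 * y1 * y2 / (1 + x1)) = 0 →
      x1 = μ ∧ y1 = ν ∧ x2 = μ ∧ y2 = ν) := by
  obtain ⟨hμ0, hμK⟩ := hμK
  have hν0 : 0 < ν := by
    rw [hν]
    have : 0 < K - μ := sub_pos.mpr hμK
    positivity
  have hprey : μ * (1 - μ / K) - a * μ * ν / (1 + μ) = 0 :=
    (prey_rhs_eq_zero_iff ha.ne' hK.ne' hμ0.ne' (by positivity)).mpr hν
  have hpred : a * μ * ν / (1 + μ) - d * ν = 0 := by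
    rw [mul_div_right_comm, (div_one_add_eq_iff (by positivity) had.ne).mpr hμ, sub_self]
  refine ⟨⟨⟨hμ0, hν0⟩, hprey, by simpa using hpred, by simpa using hprey, by simpa using hpred⟩, ?_⟩
  intro x1 y1 x2 y2 hx1 hy1 hx2 hy2 hprey1 hpred1 hprey2 hpred2
  have hpred2' : a * x2 * y2 / (1 + x2) - d * y2 +
      ρ2 * (a * x2 * y2 * y1 / (1 + x2) - a * x1 * y2 * y1 / (1 + x1)) = 0 := by
    linear_combination hpred2
  obtain ⟨hg1, hg2⟩ := eq_of_sub_add_mul_sub_eq_zero (by positivity) (by positivity)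
    (predator_rhs_div_eq_zero hy1.ne' hpred1) (predator_rhs_div_eq_zero hy2.ne' hpred2')
  have hx1μ : x1 = μ := hμ ▸ (div_one_add_eq_iff (by positivity) had.ne).mp hg1
  have hx2μ : x2 = μ := hμ ▸ (div_one_add_eq_iff (by positivity) had.ne).mp hg2
  subst hx1μ hx2μ
  rw [one_mul] at hprey2
  exact ⟨rfl, hν ▸ (prey_rhs_eq_zero_iff ha.ne' hK.ne' hx1.ne' (by positivity)).mp hprey1,
    rfl, hν ▸ (prey_rhs_eq_zero_iff ha.ne' hK.ne' hx2.ne' (by positivity)).mp hprey2⟩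

/-- **Uniqueness of the interior equilibrium in the fully symmetric case.**
Suppose `a₁ = a₂ = a`, `d₁ = d₂ = d`, `K₁ = K₂ = K`, `r = 1`, with
`a > d > 0`, and set `μ = d/(a − d)`, `ν = (K − μ)(1 + μ)/(aK)`.  If
`0 < μ < K`, then `(μ, ν, μ, ν)` is the unique interior equilibrium of
Model (1). -/
theorem model1_symmetric_unique_interior_equilibrium
    (a K d ρ1 ρ2 : ℝ)
    (ha : 0 < a) (hK : 0 < K) (hd : 0 < d) (hρ1 : 0 ≤ ρ1) (hρ2 : 0 ≤ ρ2)
    (had : d < a)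
    (μ ν : ℝ) (hμ : μ = d / (a - d)) (hν : ν = (K - μ) * (1 + μ) / (a * K))
    (hμK : 0 < μ ∧ μ < K) :
    ((0 < μ ∧ 0 < ν) ∧
      μ * (1 - μ / K) - a * μ * ν / (1 + μ) = 0 ∧
      a * μ * ν / (1 + μ) - d * ν +
        ρ1 * (a * μ * ν * ν / (1 + μ) - a * μ * ν * ν / (1 + μ)) = 0 ∧
      1 * μ * (1 - μ / K) - a * μ * ν / (1 + μ) = 0 ∧
      a * μ * ν / (1 + μ) - d * ν +
        ρ2 * (a * μ * ν * ν / (1 + μ) - a * μ * ν * ν / (1 + μ)) = 0) ∧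
    (∀ x1 y1 x2 y2 : ℝ, 0 < x1 → 0 < y1 → 0 < x2 → 0 < y2 →
      x1 * (1 - x1 / K) - a * x1 * y1 / (1 + x1) = 0 →
      a * x1 * y1 / (1 + x1) - d * y1 +
        ρ1 * (a * x1 * y1 * y2 / (1 + x1) - a * x2 * y1 * y2 / (1 + x2)) = 0 →
      1 * x2 * (1 - x2 / K) - a * x2 * y2 / (1 + x2) = 0 →
      a * x2 * y2 / (1 + x2) - d * y2 +
        ρ2 * (a * x2 * y1 * y2 / (1 + x2) - a * x1 * y1 * y2 / (1 + x1)) = 0 →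
      x1 = μ ∧ y1 = ν ∧ x2 = μ ∧ y2 = ν) :=
  model1_symmetric_unique_interior_equilibrium_general a K d ρ1 ρ2 ha hK hρ1 hρ2 had μ ν hμ hν hμK
end
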